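/- arXiv:1207.4523 — 8 statements merged into one kernel-verified Lean document; each statement's English description precedes it below -/
import Mathlib

section
/- For all indices i, j ∈ {1,…,n} and every polynomial p ∈ ℂ[x₁,…,xₙ], the Dunkl operators commute: D_i(D_j(p)) = D_j(D_i(p)). -/
/-!
Write `Δᵢⱼ` for the difference quotient and `Eᵢ = ∑_{k ≠ i} Δᵢₖ`, so that `Dᵢ = ∂ᵢ + c Eᵢ` and, as
`∂ᵢ` and `∂ⱼ` commute, `[Dᵢ, Dⱼ] = c ([∂ᵢ, Eⱼ] - [∂ⱼ, Eᵢ]) + c² [Eᵢ, Eⱼ]`.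

Since `Δᵢⱼ p` (`i ≠ j`) is determined by `(xᵢ - xⱼ) Δᵢⱼ p = sᵢⱼ p - p`, every additive operator commuting
with `sᵢⱼ` and with multiplication by `xᵢ - xⱼ` commutes with `Δᵢⱼ`. This applies to `∂ₖ` for
`k ∉ {i, j}`, to `∂ᵢ + ∂ⱼ`, and to `Δₖₗ` for `{k, l}` disjoint from `{i, j}`. Hence
`[∂ᵢ, Eⱼ] = [∂ᵢ, Δⱼᵢ] = [∂ⱼ, Δᵢⱼ] = [∂ⱼ, Eᵢ]`, and in `[Eᵢ, Eⱼ]` only the terms involving `i`, `j`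
and one third index `m` survive. For each `m` they form the alternating sum of `Δ_{ab} Δ_{bc}` over
the six orderings `(a, b, c)` of `{i, j, m}`; multiplied by `(xᵢ - xⱼ)(xⱼ - xₘ)(xₘ - xᵢ)`, each such
term becomes a combination of `p`, its images under the three transpositions and its images
under the two 3-cycles, and these cancel.
-/

open MvPolynomial Equiv Finset

theorem Equiv.swap_mul_swap_eq_swap_mul_swap {α : Type*} [DecidableEq α] {a b c : α}
    (hbc : b ≠ c) (hac : a ≠ c) : swap a b * swap b c = swap c a * swap a b := by
  rw [mul_swap_eq_swap_mul, swap_apply_right, swap_apply_of_ne_of_ne hac.symm hbc.symm, swap_comm]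

theorem Finset.sum_insert_sum_insert_eq {α M : Type*} [DecidableEq α] [AddCommMonoid M]
    {i j : α} {S : Finset α} (hiS : i ∉ S) (hjS : j ∉ S) (F : α → α → M)
    (hF : ∀ k ∈ S, ∀ l ∈ S, k ≠ l → F k l = 0) :
    ∑ k ∈ insert j S, ∑ l ∈ insert i S, F k l = F j i + ∑ m ∈ S, (F j m + F m i + F m m) := by
  have hrow : ∀ k ∈ S, ∑ l ∈ insert i S, F k l = F k i + F k k := fun k hk => by
    rw [sum_insert hiS, sum_eq_single_of_mem k hk fun l hl hlk => hF k hk l hl hlk.symm]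
  rw [sum_insert hjS, sum_congr rfl hrow, sum_insert hiS, sum_add_distrib, sum_add_distrib,
    sum_add_distrib]
  abel

variable {R σ : Type*} [CommRing R]

theorem MvPolynomial.X_sub_X_ne_zero [Nontrivial R] {i j : σ} (h : i ≠ j) :
    (X i - X j : MvPolynomial σ R) ≠ 0 :=
  sub_ne_zero.2 ((X_injective (R := R)).ne h)

variable [DecidableEq σ]

namespace MvPolynomial

theorem pderiv_pderiv_comm (i j : σ) (p : MvPolynomial σ R) :
    pderiv i (pderiv j p) = pderiv j (pderiv i p) := by
  have h : ⁅pderiv i, pderiv j⁆ = (0 : Derivation R (MvPolynomial σ R) (MvPolynomial σ R)) :=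
    derivation_ext fun k => by
      rw [Derivation.commutator_apply]
      simp [pderiv_X, Pi.single_apply, apply_ite]
  simpa [Derivation.commutator_apply, sub_eq_zero] using congr($h p)

theorem pderiv_rename_swap (a b k : σ) (p : MvPolynomial σ R) :
    pderiv k (rename (swap a b) p) = rename (swap a b) (pderiv (swap a b k) p) := by
  conv_lhs => rw [← swap_apply_self a b k]
  exact pderiv_rename (swap a b).injective _ _

end MvPolynomial

def IsDividedDifference (Δ : σ → σ → MvPolynomial σ R → MvPolynomial σ R) : Prop :=
  ∀ i j p, (X i - X j) * Δ i j p = rename (swap i j) p - p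

noncomputable def divDiffSum [Fintype σ] (Δ : σ → σ → MvPolynomial σ R → MvPolynomial σ R)
    (i : σ) (p : MvPolynomial σ R) : MvPolynomial σ R :=
  ∑ k ∈ univ.erase i, Δ i k p

namespace IsDividedDifference

variable {Δ : σ → σ → MvPolynomial σ R → MvPolynomial σ R} (hΔ : IsDividedDifference Δ)
  {i j k l : σ}
include hΔ

theorem mul_apply_apply (hjk : j ≠ k) (hik : i ≠ k) (p : MvPolynomial σ R) :
    (X i - X j) * (X j - X k) * (X i - X k) * Δ i j (Δ j k p) =
      (X j - X k) * (rename (swap i j * swap j k) p - rename (swap i j) p) -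
        (X i - X k) * (rename (swap j k) p - p) := by
  have hswap : (X i - X k) * rename (swap i j) (Δ j k p) =
      rename (swap i j * swap j k) p - rename (swap i j) p := by
    have h := congr(rename (swap i j) $(hΔ j k p))
    rwa [map_mul, map_sub, rename_X, rename_X, swap_apply_right,
      swap_apply_of_ne_of_ne hik.symm hjk.symm, map_sub, rename_rename, ← Perm.coe_mul] at h
  linear_combination (X j - X k) * (X i - X k) * hΔ i j (Δ j k p) + (X j - X k) * hswap -
    (X i - X k) * hΔ j k p

variable [IsDomain R]

theorem eq_of_mul_eq (h : i ≠ j) {p q : MvPolynomial σ R}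
    (hq : (X i - X j) * q = rename (swap i j) p - p) : Δ i j p = q :=
  mul_left_cancel₀ (X_sub_X_ne_zero h) ((hΔ i j p).trans hq.symm)

theorem antisymm (h : i ≠ j) (p : MvPolynomial σ R) : Δ j i p = -Δ i j p :=
  hΔ.eq_of_mul_eq h.symm (by rw [swap_comm, ← hΔ i j p]; ring)

theorem map_add (h : i ≠ j) (p q : MvPolynomial σ R) : Δ i j (p + q) = Δ i j p + Δ i j q :=
  hΔ.eq_of_mul_eq h (by rw [mul_add, hΔ, hΔ, _root_.map_add]; ring)

noncomputable def toAddMonoidHom (h : i ≠ j) : MvPolynomial σ R →+ MvPolynomial σ R :=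
  AddMonoidHom.mk' (Δ i j) (hΔ.map_add h)

theorem map_neg (h : i ≠ j) (p : MvPolynomial σ R) : Δ i j (-p) = -Δ i j p :=
  (hΔ.toAddMonoidHom h).map_neg p

theorem map_sub (h : i ≠ j) (p q : MvPolynomial σ R) : Δ i j (p - q) = Δ i j p - Δ i j q :=
  (hΔ.toAddMonoidHom h).map_sub p q

theorem map_sum (h : i ≠ j) {ι : Type*} (s : Finset ι) (f : ι → MvPolynomial σ R) :
    Δ i j (∑ k ∈ s, f k) = ∑ k ∈ s, Δ i j (f k) :=
  _root_.map_sum (hΔ.toAddMonoidHom h) f s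

theorem map_mul_of_rename_eq (h : i ≠ j) {f : MvPolynomial σ R} (hf : rename (swap i j) f = f)
    (q : MvPolynomial σ R) : Δ i j (f * q) = f * Δ i j q :=
  hΔ.eq_of_mul_eq h (by rw [mul_left_comm, hΔ, map_mul, hf]; ring)

theorem map_C_mul (h : i ≠ j) (a : R) (q : MvPolynomial σ R) :
    Δ i j (C a * q) = C a * Δ i j q :=
  hΔ.map_mul_of_rename_eq h (rename_C _ _) q

theorem rename_apply (e : Perm σ) (h : i ≠ j) (p : MvPolynomial σ R) :
    rename e (Δ i j p) = Δ (e i) (e j) (rename e p) := by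
  refine (hΔ.eq_of_mul_eq (e.injective.ne h) ?_).symm
  have he : rename (swap (e i) (e j)) (rename e p) = rename e (rename (swap i j) p) := by
    rw [rename_rename, rename_rename, ← Perm.coe_mul, ← Perm.coe_mul, mul_swap_eq_swap_mul]
  rw [he, ← rename_X, ← rename_X, ← _root_.map_sub, ← map_mul, hΔ, _root_.map_sub]

theorem apply_comm (h : i ≠ j) {L : MvPolynomial σ R → MvPolynomial σ R}
    (hL : ∀ a b, L (a - b) = L a - L b) (hmul : ∀ q, L ((X i - X j) * q) = (X i - X j) * L q)
    (hswap : ∀ q, L (rename (swap i j) q) = rename (swap i j) (L q)) (p : MvPolynomial σ R) :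
    Δ i j (L p) = L (Δ i j p) :=
  hΔ.eq_of_mul_eq h (by rw [← hmul, hΔ, hL, hswap])

theorem comm_of_disjoint (hij : i ≠ j) (hkl : k ≠ l) (hik : i ≠ k) (hil : i ≠ l) (hjk : j ≠ k)
    (hjl : j ≠ l) (p : MvPolynomial σ R) : Δ i j (Δ k l p) = Δ k l (Δ i j p) := by
  refine hΔ.apply_comm hij (hΔ.map_sub hkl) (hΔ.map_mul_of_rename_eq hkl ?_) (fun q => ?_) p
  · rw [_root_.map_sub, rename_X, rename_X, swap_apply_of_ne_of_ne hik hil,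
      swap_apply_of_ne_of_ne hjk hjl]
  · rw [hΔ.rename_apply _ hkl, swap_apply_of_ne_of_ne hik.symm hjk.symm,
      swap_apply_of_ne_of_ne hil.symm hjl.symm]

theorem apply_pderiv_of_ne (hij : i ≠ j) (hki : k ≠ i) (hkj : k ≠ j) (p : MvPolynomial σ R) :
    Δ i j (pderiv k p) = pderiv k (Δ i j p) :=
  hΔ.apply_comm hij (_root_.map_sub _)
    (fun q => by
      rw [pderiv_mul, _root_.map_sub, pderiv_X_of_ne hki.symm, pderiv_X_of_ne hkj.symm]; ring)
    (fun q => by rw [pderiv_rename_swap, swap_apply_of_ne_of_ne hki hkj]) p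

theorem apply_pderiv_add_pderiv (hij : i ≠ j) (p : MvPolynomial σ R) :
    Δ i j (pderiv i p + pderiv j p) = pderiv i (Δ i j p) + pderiv j (Δ i j p) :=
  hΔ.apply_comm hij (L := fun q => pderiv i q + pderiv j q)
    (fun a b => by simp only [_root_.map_sub]; ring)
    (fun q => by
      simp only [pderiv_mul, _root_.map_sub, pderiv_X_self, pderiv_X_of_ne hij,
        pderiv_X_of_ne hij.symm]
      ring)
    (fun q => by
      rw [_root_.map_add, pderiv_rename_swap, pderiv_rename_swap, swap_apply_left,
        swap_apply_right, add_comm]) p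

theorem pderiv_apply_sub_apply_pderiv_comm (hij : i ≠ j) (p : MvPolynomial σ R) :
    pderiv i (Δ j i p) - Δ j i (pderiv i p) = pderiv j (Δ i j p) - Δ i j (pderiv j p) := by
  have h := hΔ.apply_pderiv_add_pderiv hij p
  rw [hΔ.map_add hij] at h
  rw [hΔ.antisymm hij, hΔ.antisymm hij, _root_.map_neg]
  linear_combination h

theorem cyclic_sum_eq (hij : i ≠ j) (hjk : j ≠ k) (hik : i ≠ k) (p : MvPolynomial σ R) :
    Δ i j (Δ j k p) + Δ j k (Δ k i p) + Δ k i (Δ i j p) =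
      Δ k j (Δ j i p) + Δ i k (Δ k j p) + Δ j i (Δ i k p) := by
  have h₁ := hΔ.mul_apply_apply hjk hik p
  have h₂ := hΔ.mul_apply_apply hik.symm hij.symm p
  have h₃ := hΔ.mul_apply_apply hij hjk.symm p
  have h₄ := hΔ.mul_apply_apply hij.symm hik.symm p
  have h₅ := hΔ.mul_apply_apply hjk.symm hij p
  have h₆ := hΔ.mul_apply_apply hik hjk p
  simp only [swap_mul_swap_eq_swap_mul_swap hjk hik, swap_mul_swap_eq_swap_mul_swap hij hjk.symm,
    swap_mul_swap_eq_swap_mul_swap hij.symm hik.symm, swap_mul_swap_eq_swap_mul_swap hjk.symm hij]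
    at h₁ h₂ h₃ h₄ h₅ h₆
  simp only [swap_comm k j, swap_comm j i, swap_comm i k] at h₁ h₂ h₃ h₄ h₅ h₆
  refine mul_left_cancel₀ (mul_ne_zero (mul_ne_zero (X_sub_X_ne_zero hij) (X_sub_X_ne_zero hjk))
    (X_sub_X_ne_zero hik.symm)) ?_
  linear_combination -h₁ - h₂ - h₃ - h₄ - h₅ - h₆

theorem commutator_sum_eq_zero (hij : i ≠ j) (hjk : j ≠ k) (hik : i ≠ k)
    (p : MvPolynomial σ R) :
    (Δ i j (Δ j k p) - Δ j k (Δ i j p)) + (Δ i k (Δ j i p) - Δ j i (Δ i k p)) +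
      (Δ i k (Δ j k p) - Δ j k (Δ i k p)) = 0 := by
  have e₁ : Δ j k (Δ i j p) = Δ k j (Δ j i p) := by
    rw [hΔ.antisymm hjk.symm, hΔ.antisymm hij.symm p, hΔ.map_neg hjk.symm, neg_neg]
  have e₂ : Δ i k (Δ j i p) = Δ k i (Δ i j p) := by
    rw [hΔ.antisymm hij p, hΔ.map_neg hik, hΔ.antisymm hik]
  have e₃ : Δ i k (Δ j k p) = -Δ i k (Δ k j p) := by
    rw [hΔ.antisymm hjk p, hΔ.map_neg hik, neg_neg]
  have e₄ : Δ j k (Δ i k p) = -Δ j k (Δ k i p) := by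
    rw [hΔ.antisymm hik p, hΔ.map_neg hjk, neg_neg]
  linear_combination hΔ.cyclic_sum_eq hij hjk hik p - e₁ + e₂ + e₃ - e₄

section Fintype

variable [Fintype σ]

theorem divDiffSum_add (i : σ) (p q : MvPolynomial σ R) :
    divDiffSum Δ i (p + q) = divDiffSum Δ i p + divDiffSum Δ i q := by
  rw [divDiffSum, divDiffSum, divDiffSum, ← sum_add_distrib]
  exact sum_congr rfl fun k hk => hΔ.map_add (ne_of_mem_erase hk).symm p q

theorem divDiffSum_C_mul (i : σ) (a : R) (p : MvPolynomial σ R) :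
    divDiffSum Δ i (C a * p) = C a * divDiffSum Δ i p := by
  rw [divDiffSum, divDiffSum, mul_sum]
  exact sum_congr rfl fun k hk => hΔ.map_C_mul (ne_of_mem_erase hk).symm a p

theorem pderiv_divDiffSum_sub_divDiffSum_pderiv (hij : i ≠ j) (p : MvPolynomial σ R) :
    pderiv i (divDiffSum Δ j p) - divDiffSum Δ j (pderiv i p) =
      pderiv i (Δ j i p) - Δ j i (pderiv i p) := by
  rw [divDiffSum, divDiffSum, _root_.map_sum, ← sum_sub_distrib]
  refine sum_eq_single_of_mem i (mem_erase.2 ⟨hij, mem_univ i⟩) fun l hl hli => ?_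
  rw [hΔ.apply_pderiv_of_ne (ne_of_mem_erase hl).symm hij hli.symm, sub_self]

theorem pderiv_divDiffSum_sub_divDiffSum_pderiv_comm (hij : i ≠ j) (p : MvPolynomial σ R) :
    pderiv i (divDiffSum Δ j p) - divDiffSum Δ j (pderiv i p) =
      pderiv j (divDiffSum Δ i p) - divDiffSum Δ i (pderiv j p) := by
  rw [hΔ.pderiv_divDiffSum_sub_divDiffSum_pderiv hij,
    hΔ.pderiv_divDiffSum_sub_divDiffSum_pderiv hij.symm,
    hΔ.pderiv_apply_sub_apply_pderiv_comm hij]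

theorem divDiffSum_divDiffSum (i j : σ) (p : MvPolynomial σ R) :
    divDiffSum Δ i (divDiffSum Δ j p) = ∑ k ∈ univ.erase i, ∑ l ∈ univ.erase j, Δ i k (Δ j l p) :=
  sum_congr rfl fun _ hk => hΔ.map_sum (ne_of_mem_erase hk).symm _ _

theorem divDiffSum_comm (i j : σ) (p : MvPolynomial σ R) :
    divDiffSum Δ i (divDiffSum Δ j p) = divDiffSum Δ j (divDiffSum Δ i p) := by
  rcases eq_or_ne i j with rfl | hij
  · rfl
  set S := (univ.erase i).erase j with hS
  have hi : univ.erase i = insert j S := (insert_erase (mem_erase.2 ⟨hij.symm, mem_univ j⟩)).symm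
  have hj : univ.erase j = insert i S := by
    rw [hS, erase_right_comm, insert_erase (mem_erase.2 ⟨hij, mem_univ i⟩)]
  have hiS : i ∉ S := fun h => notMem_erase i _ (mem_of_mem_erase h)
  have hjS : j ∉ S := notMem_erase j _
  have hne : ∀ m ∈ S, m ≠ i ∧ m ≠ j := fun m hm =>
    ⟨ne_of_mem_erase (mem_of_mem_erase hm), ne_of_mem_erase hm⟩
  rw [← sub_eq_zero, hΔ.divDiffSum_divDiffSum, hΔ.divDiffSum_divDiffSum,
    sum_comm (s := univ.erase j)]
  simp only [← sum_sub_distrib]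
  rw [hi, hj, sum_insert_sum_insert_eq hiS hjS]
  · have hji : Δ i j (Δ j i p) - Δ j i (Δ i j p) = 0 := by
      rw [hΔ.antisymm hij, hΔ.antisymm hij, hΔ.map_neg hij, sub_self]
    rw [hji, zero_add]
    exact sum_eq_zero fun m hm =>
      hΔ.commutator_sum_eq_zero hij (hne m hm).2.symm (hne m hm).1.symm p
  · intro k hk l hl hkl
    rw [hΔ.comm_of_disjoint (hne k hk).1.symm (hne l hl).2.symm hij (hne l hl).1.symm
      (hne k hk).2 hkl, sub_self]

end Fintype

end IsDividedDifference

theorem dunkl_operators_commute_general (n : ℕ) (c : ℂ)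
    (Δ : Fin n → Fin n → MvPolynomial (Fin n) ℂ → MvPolynomial (Fin n) ℂ)
    (hΔ : ∀ i j p, (X i - X j) * Δ i j p = rename (Equiv.swap i j) p - p)
    (D : Fin n → MvPolynomial (Fin n) ℂ → MvPolynomial (Fin n) ℂ)
    (hD : ∀ i p, D i p = pderiv i p + C c * ∑ j ∈ Finset.univ.erase i, Δ i j p)
    (i j : Fin n) (p : MvPolynomial (Fin n) ℂ) :
    D i (D j p) = D j (D i p) := by
  replace hΔ : IsDividedDifference Δ := hΔ
  replace hD : ∀ a q, D a q = pderiv a q + C c * divDiffSum Δ a q := hD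
  have expand (a b : Fin n) : D a (D b p) = pderiv a (pderiv b p) +
      C c * (pderiv a (divDiffSum Δ b p) + divDiffSum Δ a (pderiv b p)) +
      C c * C c * divDiffSum Δ a (divDiffSum Δ b p) := by
    rw [hD a, hD b, map_add, pderiv_C_mul, hΔ.divDiffSum_add, hΔ.divDiffSum_C_mul]
    ring
  rcases eq_or_ne i j with rfl | hij
  · rfl
  rw [expand, expand, pderiv_pderiv_comm i j, hΔ.divDiffSum_comm i j]
  linear_combination C c * hΔ.pderiv_divDiffSum_sub_divDiffSum_pderiv_comm hij p

/-- The Dunkl operators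
`D_i(p) = ∂p/∂x_i + c·∑_{j≠i} (s_{ij}p − p)/(x_i − x_j)` pairwise commute.
The difference quotient `(s_{ij}p − p)/(x_i − x_j)` is encoded by a function `Δ`
satisfying `(x_i − x_j) * Δ i j p = s_{ij}p − p` (which determines it uniquely for
`i ≠ j`, since `MvPolynomial (Fin n) ℂ` is an integral domain). -/
theorem dunkl_operators_commute (n : ℕ) (hn : 1 ≤ n) (c : ℂ)
    (Δ : Fin n → Fin n → MvPolynomial (Fin n) ℂ → MvPolynomial (Fin n) ℂ)
    (hΔ : ∀ i j p, (X i - X j) * Δ i j p = rename (Equiv.swap i j) p - p)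
    (D : Fin n → MvPolynomial (Fin n) ℂ → MvPolynomial (Fin n) ℂ)
    (hD : ∀ i p, D i p = pderiv i p + C c * ∑ j ∈ Finset.univ.erase i, Δ i j p)
    (i j : Fin n) (p : MvPolynomial (Fin n) ℂ) :
    D i (D j p) = D j (D i p) :=
  dunkl_operators_commute_general n c Δ hΔ D hD i j p
end

section
/- As operators on ℂ[x₁,…,xₙ], the Dunkl operators satisfy the commutation relations of the rational Cherednik algebra: for every polynomial p and every i, one has D_i(x_i·p) − x_i·D_i(p) = p − c·∑_{j≠i} s_{ij}(p), and for every i ≠ j one has D_i(x_j·p) − x_j·D_i(p) = c·s_{ij}(p). -/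
/-!
Write `δ` for a divided difference `(s_{ij} p - p) / (x_i - x_j)`. Clearing the denominator
shows the twisted Leibniz rule `δ (q * p) = q * δ p + δ q * s_{ij} p`, and on coordinates
`δ x_i = -1`, `δ x_j = 1`, `δ x_k = 0` otherwise. Together with the ordinary Leibniz rule for
`∂/∂x_i`, the commutator `[D_i, x_k]` is therefore multiplication by `∂x_k/∂x_i` plus
`c ∑_{j ≠ i} δ_{ij}(x_k) s_{ij}`, which evaluates to the two stated relations.
-/

open MvPolynomial

namespace MvPolynomial

variable {σ R : Type*} [CommRing R]

theorem X_sub_X_ne_zero_s1 [Nontrivial R] {i j : σ} (hij : i ≠ j) :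
    (X i - X j : MvPolynomial σ R) ≠ 0 :=
  sub_ne_zero.mpr fun h => hij (X_injective h)

section DividedDifference

variable [IsDomain R] [DecidableEq σ] {i j : σ} {δ : MvPolynomial σ R → MvPolynomial σ R}

theorem divDiff_eq_of_mul_eq (hij : i ≠ j)
    (hδ : ∀ p, (X i - X j) * δ p = rename (Equiv.swap i j) p - p) {p q : MvPolynomial σ R}
    (h : (X i - X j) * q = rename (Equiv.swap i j) p - p) : δ p = q :=
  mul_left_cancel₀ (X_sub_X_ne_zero_s1 hij) ((hδ p).trans h.symm)

theorem divDiff_mul (hij : i ≠ j)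
    (hδ : ∀ p, (X i - X j) * δ p = rename (Equiv.swap i j) p - p) (q p : MvPolynomial σ R) :
    δ (q * p) = q * δ p + δ q * rename (Equiv.swap i j) p := by
  refine divDiff_eq_of_mul_eq hij hδ ?_
  linear_combination q * hδ p + rename (Equiv.swap i j) p * hδ q - map_mul (rename (Equiv.swap i j)) q p

theorem divDiff_X_left (hij : i ≠ j)
    (hδ : ∀ p, (X i - X j) * δ p = rename (Equiv.swap i j) p - p) : δ (X i) = -1 :=
  divDiff_eq_of_mul_eq hij hδ (by rw [rename_X, Equiv.swap_apply_left]; ring)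

theorem divDiff_X_right (hij : i ≠ j)
    (hδ : ∀ p, (X i - X j) * δ p = rename (Equiv.swap i j) p - p) : δ (X j) = 1 :=
  divDiff_eq_of_mul_eq hij hδ (by rw [rename_X, Equiv.swap_apply_right]; ring)

theorem divDiff_X_of_ne (hij : i ≠ j)
    (hδ : ∀ p, (X i - X j) * δ p = rename (Equiv.swap i j) p - p) {k : σ} (hki : k ≠ i)
    (hkj : k ≠ j) : δ (X k) = 0 :=
  divDiff_eq_of_mul_eq hij hδ (by rw [rename_X, Equiv.swap_apply_of_ne_of_ne hki hkj]; ring)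

end DividedDifference

section Dunkl

variable [IsDomain R] [Fintype σ] [DecidableEq σ] {c : R}
  {Δ : σ → σ → MvPolynomial σ R → MvPolynomial σ R}
  {D : σ → MvPolynomial σ R → MvPolynomial σ R}

theorem dunkl_X_mul_sub_X_mul_dunkl
    (hΔ : ∀ i j p, (X i - X j) * Δ i j p = rename (Equiv.swap i j) p - p)
    (hD : ∀ i p, D i p = pderiv i p + C c * ∑ j ∈ Finset.univ.erase i, Δ i j p)
    (i k : σ) (p : MvPolynomial σ R) :
    D i (X k * p) - X k * D i p = pderiv i (X k) * p
      + C c * ∑ j ∈ Finset.univ.erase i, Δ i j (X k) * rename (Equiv.swap i j) p := by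
  have hsum : ∑ j ∈ Finset.univ.erase i, Δ i j (X k * p)
      = X k * ∑ j ∈ Finset.univ.erase i, Δ i j p
        + ∑ j ∈ Finset.univ.erase i, Δ i j (X k) * rename (Equiv.swap i j) p := by
    rw [Finset.mul_sum, ← Finset.sum_add_distrib]
    refine Finset.sum_congr rfl fun j hj => ?_
    exact divDiff_mul (Finset.ne_of_mem_erase hj).symm (hΔ i j) _ _
  rw [hD, hD, pderiv_mul, hsum]
  ring

end Dunkl

end MvPolynomial

theorem dunkl_cherednik_relations_general (n : ℕ) (c : ℂ)
    (Δ : Fin n → Fin n → MvPolynomial (Fin n) ℂ → MvPolynomial (Fin n) ℂ)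
    (hΔ : ∀ i j p, (X i - X j) * Δ i j p = rename (Equiv.swap i j) p - p)
    (D : Fin n → MvPolynomial (Fin n) ℂ → MvPolynomial (Fin n) ℂ)
    (hD : ∀ i p, D i p = pderiv i p + C c * ∑ j ∈ Finset.univ.erase i, Δ i j p) :
    (∀ (i : Fin n) (p : MvPolynomial (Fin n) ℂ),
        D i (X i * p) - X i * D i p
          = p - C c * ∑ j ∈ Finset.univ.erase i, rename (Equiv.swap i j) p) ∧
    (∀ (i j : Fin n) (p : MvPolynomial (Fin n) ℂ), i ≠ j →
        D i (X j * p) - X j * D i p = C c * rename (Equiv.swap i j) p) := by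
  refine ⟨fun i p => ?_, fun i j p hij => ?_⟩
  · have hterm : ∀ j ∈ Finset.univ.erase i,
        Δ i j (X i) * rename (Equiv.swap i j) p = -rename (Equiv.swap i j) p := fun j hj => by
      rw [divDiff_X_left (Finset.ne_of_mem_erase hj).symm (hΔ i j), neg_one_mul]
    rw [dunkl_X_mul_sub_X_mul_dunkl hΔ hD, pderiv_X_self, Finset.sum_congr rfl hterm, Finset.sum_neg_distrib]
    ring
  · have hsingle : ∑ k ∈ Finset.univ.erase i, Δ i k (X j) * rename (Equiv.swap i k) p
        = rename (Equiv.swap i j) p := by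
      rw [Finset.sum_eq_single_of_mem j (Finset.mem_erase.mpr ⟨hij.symm, Finset.mem_univ j⟩)
        fun k hk hkj => by
          rw [divDiff_X_of_ne (Finset.ne_of_mem_erase hk).symm (hΔ i k) hij.symm hkj.symm,
            zero_mul],
        divDiff_X_right hij (hΔ i j), one_mul]
    rw [dunkl_X_mul_sub_X_mul_dunkl hΔ hD, pderiv_X_of_ne hij.symm, hsingle, zero_mul, zero_add]

/-- The Dunkl operators satisfy the commutation relations of the
rational Cherednik algebra: `D_i(x_i·p) − x_i·D_i(p) = p − c·∑_{j≠i} s_{ij}(p)` and,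
for `i ≠ j`, `D_i(x_j·p) − x_j·D_i(p) = c·s_{ij}(p)`. -/
theorem dunkl_cherednik_relations (n : ℕ) (hn : 1 ≤ n) (c : ℂ)
    (Δ : Fin n → Fin n → MvPolynomial (Fin n) ℂ → MvPolynomial (Fin n) ℂ)
    (hΔ : ∀ i j p, (X i - X j) * Δ i j p = rename (Equiv.swap i j) p - p)
    (D : Fin n → MvPolynomial (Fin n) ℂ → MvPolynomial (Fin n) ℂ)
    (hD : ∀ i p, D i p = pderiv i p + C c * ∑ j ∈ Finset.univ.erase i, Δ i j p) :
    (∀ (i : Fin n) (p : MvPolynomial (Fin n) ℂ),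
        D i (X i * p) - X i * D i p
          = p - C c * ∑ j ∈ Finset.univ.erase i, rename (Equiv.swap i j) p) ∧
    (∀ (i j : Fin n) (p : MvPolynomial (Fin n) ℂ), i ≠ j →
        D i (X j * p) - X j * D i p = C c * rename (Equiv.swap i j) p) :=
  dunkl_cherednik_relations_general n c Δ hΔ D hD
end

section
/- For every integer k ≥ 2, the sum of squares of the Dunkl operators applied to the k-th power sum satisfies ∑_{a=1}^n D_a(D_a(p_k)) = (1+c)·k·(k−1)·p_{k−2} − c·k·∑_{i=0}^{k−2} p_i·p_{k−2−i}, where p_j = ∑_{a=1}^n x_a^j denotes the j-th power sum (so p_0 = n). -/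
open MvPolynomial

/-- For `k ≥ 2`, with `p_j = ∑_a x_a^j` the `j`-th power sum,
`∑_a D_a(D_a(p_k)) = (1+c)·k·(k−1)·p_{k−2} − c·k·∑_{i=0}^{k−2} p_i·p_{k−2−i}`. -/
theorem dunkl_sum_of_squares_on_power_sums (n : ℕ) (hn : 1 ≤ n) (c : ℂ)
    (Δ : Fin n → Fin n → MvPolynomial (Fin n) ℂ → MvPolynomial (Fin n) ℂ)
    (hΔ : ∀ i j p, (X i - X j) * Δ i j p = rename (Equiv.swap i j) p - p)
    (D : Fin n → MvPolynomial (Fin n) ℂ → MvPolynomial (Fin n) ℂ)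
    (hD : ∀ i p, D i p = pderiv i p + C c * ∑ j ∈ Finset.univ.erase i, Δ i j p)
    (k : ℕ) (hk : 2 ≤ k) :
    ∑ a : Fin n, D a (D a (∑ b : Fin n, X b ^ k))
      = C ((1 + c) * k * (k - 1)) * (∑ b : Fin n, X b ^ (k - 2))
        - C (c * k) * ∑ i ∈ Finset.range (k - 1),
            (∑ b : Fin n, X b ^ i) * (∑ b : Fin n, X b ^ (k - 2 - i)) := by
  classical
  -- uniqueness of Δ
  have huniq : ∀ (i j : Fin n), i ≠ j → ∀ p q : MvPolynomial (Fin n) ℂ,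
      (X i - X j) * q = rename (Equiv.swap i j) p - p → Δ i j p = q := by
    intro i j hij p q hq
    have hne : (X i - X j : MvPolynomial (Fin n) ℂ) ≠ 0 :=
      sub_ne_zero.mpr (fun h => hij (X_injective h))
    exact mul_left_cancel₀ hne ((hΔ i j p).trans hq.symm)
  -- power sums are symmetric
  have hsym : ∀ (i j : Fin n) (m : ℕ),
      rename (Equiv.swap i j) (∑ b : Fin n, (X b : MvPolynomial (Fin n) ℂ) ^ m)
        = ∑ b : Fin n, X b ^ m := by
    intro i j m
    rw [map_sum]
    simp only [map_pow, rename_X]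
    exact Fintype.sum_equiv (Equiv.swap i j) _ _ (fun b => rfl)
  have hk1 : ((k - 1 : ℕ) : MvPolynomial (Fin n) ℂ) = C ((k : ℂ) - 1) := by
    rw [← map_natCast (C : ℂ →+* MvPolynomial (Fin n) ℂ)]
    congr 1
    rw [Nat.cast_sub (by omega : 1 ≤ k), Nat.cast_one]
  -- derivative of a power sum
  have hpd : ∀ (a : Fin n) (m : ℕ),
      pderiv a (∑ b : Fin n, X b ^ m) = (m : MvPolynomial (Fin n) ℂ) * X a ^ (m - 1) := by
    intro a m
    rw [map_sum, Finset.sum_eq_single a]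
    · rw [pderiv_pow, pderiv_X_self, mul_one]
    · intro b _ hba
      rw [pderiv_pow, pderiv_X_of_ne hba, mul_zero]
    · simp
  -- inner Dunkl operator
  have hDin : ∀ a : Fin n, D a (∑ b : Fin n, X b ^ k)
      = C (k : ℂ) * X a ^ (k - 1) := by
    intro a
    rw [hD, hpd]
    have h0 : ∀ j ∈ Finset.univ.erase a, Δ a j (∑ b : Fin n, X b ^ k) = 0 := by
      intro j hj
      exact huniq a j (Finset.ne_of_mem_erase hj).symm _ 0
        (by rw [mul_zero, hsym, sub_self])
    rw [Finset.sum_congr rfl h0, Finset.sum_const, smul_zero, mul_zero, add_zero,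
      map_natCast (C : ℂ →+* MvPolynomial (Fin n) ℂ)]
  -- outer Dunkl operator
  have hexp : ∀ i : ℕ, k - 1 - 1 - i = k - 2 - i := fun i => by omega
  have hDout : ∀ a : Fin n, D a (C (k : ℂ) * X a ^ (k - 1))
      = C ((k : ℂ) * ((k : ℂ) - 1)) * X a ^ (k - 2)
        - C (c * k) * ∑ j ∈ Finset.univ.erase a,
            ∑ i ∈ Finset.range (k - 1), X a ^ i * X j ^ (k - 2 - i) := by
    intro a
    rw [hD]
    have hΔa : ∀ j ∈ Finset.univ.erase a, Δ a j (C (k : ℂ) * X a ^ (k - 1))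
        = -(C (k : ℂ) * ∑ i ∈ Finset.range (k - 1), X a ^ i * X j ^ (k - 2 - i)) := by
      intro j hj
      apply huniq a j (Finset.ne_of_mem_erase hj).symm
      rw [map_mul, map_pow, rename_X, Equiv.swap_apply_left, rename_C]
      have hg := geom_sum₂_mul (X a : MvPolynomial (Fin n) ℂ) (X j) (k - 1)
      simp only [hexp] at hg
      linear_combination (-(C (k : ℂ))) * hg
    rw [Finset.sum_congr rfl hΔa, pderiv_C_mul, pderiv_pow, pderiv_X_self, mul_one,
      hk1, (by omega : k - 1 - 1 = k - 2)]
    simp only [Finset.sum_neg_distrib, ← Finset.mul_sum, map_mul]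
    ring
  -- assemble
  simp only [hDin, hDout]
  rw [Finset.sum_sub_distrib, ← Finset.mul_sum, ← Finset.mul_sum]
  have hdiag : ∀ a : Fin n,
      ∑ i ∈ Finset.range (k - 1), (X a : MvPolynomial (Fin n) ℂ) ^ i * X a ^ (k - 2 - i)
        = C ((k : ℂ) - 1) * X a ^ (k - 2) := by
    intro a
    have h : ∀ i ∈ Finset.range (k - 1),
        (X a : MvPolynomial (Fin n) ℂ) ^ i * X a ^ (k - 2 - i) = X a ^ (k - 2) := by
      intro i hi
      rw [← pow_add]
      congr 1
      have := Finset.mem_range.mp hi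
      omega
    rw [Finset.sum_congr rfl h, Finset.sum_const, Finset.card_range, nsmul_eq_mul, hk1]
  have hT : ∑ a : Fin n, ∑ j ∈ Finset.univ.erase a,
        ∑ i ∈ Finset.range (k - 1), (X a : MvPolynomial (Fin n) ℂ) ^ i * X j ^ (k - 2 - i)
      = (∑ i ∈ Finset.range (k - 1),
          (∑ b : Fin n, X b ^ i) * (∑ b : Fin n, (X b : MvPolynomial (Fin n) ℂ) ^ (k - 2 - i)))
        - C ((k : ℂ) - 1) * ∑ b : Fin n, X b ^ (k - 2) := by
    have hrow : ∀ a : Fin n, ∑ j ∈ Finset.univ.erase a,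
        ∑ i ∈ Finset.range (k - 1), (X a : MvPolynomial (Fin n) ℂ) ^ i * X j ^ (k - 2 - i)
        = (∑ i ∈ Finset.range (k - 1), X a ^ i * ∑ b : Fin n, X b ^ (k - 2 - i))
          - C ((k : ℂ) - 1) * X a ^ (k - 2) := by
      intro a
      rw [Finset.sum_erase_eq_sub (Finset.mem_univ a), hdiag, Finset.sum_comm]
      simp_rw [← Finset.mul_sum]
    rw [Finset.sum_congr rfl (fun a _ => hrow a), Finset.sum_sub_distrib, ← Finset.mul_sum,
      Finset.sum_comm]
    congr 1
    refine Finset.sum_congr rfl fun i _ => ?_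
    rw [← Finset.sum_mul]
  rw [hT]
  simp only [map_mul, map_add, map_one, map_sub]
  ring
end

section
/- Let 𝔞 ⊂ ℂ[x₁,…,xₙ] be the ideal generated by the symmetric polynomials with zero constant term. Then for every integer k ≥ 1 and every index i, the Dunkl operator lowers the 𝔞-adic filtration by at most one step: D_i(𝔞^k) ⊆ 𝔞^{k−1}. -/
open MvPolynomial

/-- Let `𝔞` be the ideal of `ℂ[x₁,…,xₙ]` generated by the symmetric
polynomials with zero constant term.  Then each Dunkl operator lowers the `𝔞`-adic
filtration by at most one step: `D_i(𝔞^k) ⊆ 𝔞^{k−1}` for `k ≥ 1`. -/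
theorem dunkl_lowers_adic_filtration (n : ℕ) (hn : 1 ≤ n) (c : ℂ)
    (Δ : Fin n → Fin n → MvPolynomial (Fin n) ℂ → MvPolynomial (Fin n) ℂ)
    (hΔ : ∀ i j p, (X i - X j) * Δ i j p = rename (Equiv.swap i j) p - p)
    (D : Fin n → MvPolynomial (Fin n) ℂ → MvPolynomial (Fin n) ℂ)
    (hD : ∀ i p, D i p = pderiv i p + C c * ∑ j ∈ Finset.univ.erase i, Δ i j p)
    (𝔞 : Ideal (MvPolynomial (Fin n) ℂ))
    (h𝔞 : 𝔞 = Ideal.span {p : MvPolynomial (Fin n) ℂ |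
        p.IsSymmetric ∧ constantCoeff p = 0})
    (k : ℕ) (hk : 1 ≤ k) (i : Fin n)
    (f : MvPolynomial (Fin n) ℂ) (hf : f ∈ 𝔞 ^ k) :
    D i f ∈ 𝔞 ^ (k - 1) := by
  classical
  have hne : ∀ j : Fin n, j ≠ i → (X i - X j : MvPolynomial (Fin n) ℂ) ≠ 0 := by
    intro j hj h
    exact hj (MvPolynomial.X_injective (sub_eq_zero.mp h)).symm
  have hcancel : ∀ (j : Fin n), j ≠ i → ∀ p q : MvPolynomial (Fin n) ℂ,
      (X i - X j) * p = (X i - X j) * q → p = q :=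
    fun j hj p q h => mul_left_cancel₀ (hne j hj) h
  subst h𝔞
  set S : Set (MvPolynomial (Fin n) ℂ) :=
    {p | p.IsSymmetric ∧ constantCoeff p = 0} with hSdef
  -- stability of powers of the ideal under renaming
  have hstab : ∀ (σ : Equiv.Perm (Fin n)) (m : ℕ) (p : MvPolynomial (Fin n) ℂ),
      p ∈ (Ideal.span S) ^ m → rename σ p ∈ (Ideal.span S) ^ m := by
    intro σ m p hp
    have himg : (rename (σ : Fin n → Fin n)) '' S = S := by
      ext q
      constructor
      · rintro ⟨r, hr, rfl⟩
        rw [hr.1 σ]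
        exact hr
      · intro hq
        exact ⟨q, hq, hq.1 σ⟩
    have hmap : Ideal.map (rename (σ : Fin n → Fin n)) (Ideal.span S) = Ideal.span S := by
      rw [Ideal.map_span, himg]
    have := Ideal.mem_map_of_mem (rename (σ : Fin n → Fin n)) hp
    rwa [Ideal.map_pow, hmap] at this
  -- additivity of Δ i j
  have hΔadd : ∀ j : Fin n, j ≠ i → ∀ p q,
      Δ i j (p + q) = Δ i j p + Δ i j q := by
    intro j hj p q
    apply hcancel j hj
    rw [hΔ, mul_add, hΔ, hΔ, map_add]
    ring
  -- twisted Leibniz rule for Δ i j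
  have hΔmul : ∀ j : Fin n, j ≠ i → ∀ p q,
      Δ i j (p * q) = rename (Equiv.swap i j) p * Δ i j q + Δ i j p * q := by
    intro j hj p q
    apply hcancel j hj
    rw [hΔ, map_mul]
    linear_combination (-(rename (Equiv.swap i j) p)) * hΔ i j q - q * hΔ i j p
  -- main induction
  have key : ∀ m : ℕ, ∀ f : MvPolynomial (Fin n) ℂ, f ∈ (Ideal.span S) ^ (m + 1) →
      pderiv i f ∈ (Ideal.span S) ^ m ∧
        ∀ j : Fin n, j ≠ i → Δ i j f ∈ (Ideal.span S) ^ m := by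
    intro m
    induction m with
    | zero =>
      intro f hf
      simp [Ideal.one_eq_top]
    | succ m ih =>
      intro f hf
      rw [pow_succ] at hf
      refine Submodule.mul_induction_on hf ?_ ?_
      · intro a ha b hb
        obtain ⟨hpa, hΔa⟩ := ih a ha
        constructor
        · rw [pderiv_mul]
          refine Ideal.add_mem _ ?_ ?_
          · have : pderiv i a * b ∈ (Ideal.span S) ^ m * Ideal.span S :=
              Ideal.mul_mem_mul hpa hb
            rwa [← pow_succ] at this
          · exact Ideal.mul_mem_right _ _ ha
        · intro j hj
          rw [hΔmul j hj]
          refine Ideal.add_mem _ ?_ ?_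
          · exact Ideal.mul_mem_right _ _ (hstab _ _ _ ha)
          · have : Δ i j a * b ∈ (Ideal.span S) ^ m * Ideal.span S :=
              Ideal.mul_mem_mul (hΔa j hj) hb
            rwa [← pow_succ] at this
      · intro x y hx hy
        refine ⟨?_, ?_⟩
        · rw [map_add]; exact Ideal.add_mem _ hx.1 hy.1
        · intro j hj
          rw [hΔadd j hj]
          exact Ideal.add_mem _ (hx.2 j hj) (hy.2 j hj)
  obtain ⟨m, rfl⟩ : ∃ m, k = m + 1 := ⟨k - 1, (Nat.succ_pred_eq_of_pos hk).symm⟩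
  obtain ⟨hp, hΔm⟩ := key m f hf
  simp only [Nat.add_sub_cancel]
  rw [hD]
  refine Ideal.add_mem _ hp (Ideal.mul_mem_left _ _ (Ideal.sum_mem _ ?_))
  intro j hj
  exact hΔm j (Finset.mem_erase.mp hj).1
end

section
/- Let m and n be coprime positive integers. The number of m/n-parking functions, i.e. functions f : {1,…,n} → {1,…,m} such that m·|{i : f(i) ≤ k}| ≥ k·n for every k with 1 ≤ k ≤ m, equals m^{n−1}. -/
/-- An `m/n`-parking function, encoded as `f : Fin n → Fin m` where the value
`f i : Fin m` represents the integer `(f i : ℕ) + 1 ∈ {1,…,m}`: for every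
`1 ≤ k ≤ m`, the number of indices `i` with `f(i) ≤ k` satisfies
`m·|{i : f(i) ≤ k}| ≥ k·n`. -/
def IsParkingFunction (m n : ℕ) (f : Fin n → Fin m) : Prop :=
  ∀ k : ℕ, 1 ≤ k → k ≤ m →
    k * n ≤ m * (Finset.univ.filter fun i : Fin n => (f i : ℕ) + 1 ≤ k).card

/-!
Pollak's cyclic argument. View `g : Fin n → ZMod m` through all integer lifts of its
values and let `H j` be, up to a constant, `m · #{lifts in [0, j)} - j · n` (the height of
the associated lattice path), extended to all `j : ℤ` so that it is `m`-periodic. The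
shift `i ↦ (g i + c).val` is a parking function iff `H` attains its minimum at `-c`, and
as `m` and `n` are coprime, `H` takes distinct values on distinct residues mod `m`. So
exactly one of the `m` shifts of each `g` is a parking function, and `m · #PF = m ^ n`.
-/

theorem Int.ediv_sub_ediv_eq_ite {m : ℤ} (hm : 0 < m) (x : ℤ) {k : ℤ} (hk0 : 0 ≤ k)
    (hk : k ≤ m) : (k - x - 1) / m - (-x - 1) / m = if x % m < k then 1 else 0 := by
  have hx := Int.emod_add_mul_ediv x m
  have hr0 := Int.emod_nonneg x hm.ne'
  have hr := Int.emod_lt_of_pos x hm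
  have hlow : (-x - 1) / m = -1 - x / m := by
    rw [Int.ediv_eq_iff_of_pos hm]; constructor <;> linarith
  split_ifs with hlt
  · have hup : (k - x - 1) / m = -(x / m) := by
      rw [Int.ediv_eq_iff_of_pos hm]; constructor <;> linarith
    rw [hup, hlow]; ring
  · have hup : (k - x - 1) / m = -1 - x / m := by
      rw [Int.ediv_eq_iff_of_pos hm]; constructor <;> linarith
    rw [hup, hlow]; ring

theorem Function.Injective.existsUnique_forall_le {α β : Type*} [Finite α] [Nonempty α]
    [LinearOrder β] {F : α → β} (hF : Function.Injective F) : ∃! a, ∀ b, F a ≤ F b := by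
  obtain ⟨a, ha⟩ := Finite.exists_min F
  exact ⟨a, ha, fun a' ha' => hF ((ha' a).antisymm (ha a'))⟩

open Finset

namespace ParkingFunction

variable {m n : ℕ} (g : Fin n → ZMod m)

/-- For `j ≥ 0`, `(j - r - 1) / m + 1` counts the `x ∈ [0, j)` with `x ≡ r [ZMOD m]`. -/
def liftCount (j : ℤ) : ℤ := ∑ i, (j - (g i).val - 1) / m

def discrepancy (j : ℤ) : ℤ := m * liftCount g j - j * n

lemma intCast_eq_of_discrepancy_eq (hmn : m.Coprime n) {a b : ℤ}
    (h : discrepancy g a = discrepancy g b) : (a : ZMod m) = b := by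
  have hdvd : (m : ℤ) ∣ (b - a) * n := ⟨liftCount g b - liftCount g a, by
    simp only [discrepancy] at h; linarith⟩
  exact (ZMod.intCast_eq_intCast_iff_dvd_sub a b m).2
    ((Nat.isCoprime_iff_coprime.2 hmn).dvd_of_dvd_mul_right hdvd)

variable [NeZero m]

lemma liftCount_add_mul (j t : ℤ) : liftCount g (j + t * m) = liftCount g j + t * n := by
  have hm : (m : ℤ) ≠ 0 := by exact_mod_cast NeZero.ne m
  have hterm (i : Fin n) : (j + t * m - (g i).val - 1) / m = (j - (g i).val - 1) / m + t := by
    rw [← Int.add_mul_ediv_right _ _ hm]; ring_nf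
  simp only [liftCount, hterm, sum_add_distrib, sum_const, card_univ, Fintype.card_fin,
    nsmul_eq_mul]
  ring

lemma discrepancy_add_mul (j t : ℤ) : discrepancy g (j + t * m) = discrepancy g j := by
  rw [discrepancy, discrepancy, liftCount_add_mul]; ring

lemma discrepancy_congr {a b : ℤ} (h : (a : ZMod m) = b) : discrepancy g a = discrepancy g b := by
  obtain ⟨t, ht⟩ := (ZMod.intCast_eq_intCast_iff_dvd_sub a b m).1 h
  rw [show b = a + t * m by linarith, discrepancy_add_mul]

lemma card_val_add_lt (c : ZMod m) {k : ℕ} (hk : k ≤ m) :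
    (#{i | (g i + c).val < k} : ℤ) = liftCount g (k - c.val) - liftCount g (-c.val) := by
  have hm : (0 : ℤ) < m := by exact_mod_cast NeZero.pos m
  rw [liftCount, liftCount, ← sum_sub_distrib, card_filter, Nat.cast_sum]
  refine sum_congr rfl fun i _ => ?_
  have := Int.ediv_sub_ediv_eq_ite hm ((g i).val + c.val) (Int.natCast_nonneg k)
    (by exact_mod_cast hk)
  rw [ZMod.val_add]
  push_cast
  rw [show (k : ℤ) - c.val - (g i).val - 1 = k - ((g i).val + c.val) - 1 by ring,
    show -(c.val : ℤ) - (g i).val - 1 = -((g i).val + c.val) - 1 by ring, this]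
  norm_cast

def shift (c : ZMod m) : Fin n → Fin m := fun i => ⟨(g i + c).val, ZMod.val_lt _⟩

lemma isParkingFunction_shift_iff (c : ZMod m) : IsParkingFunction m n (shift g c) ↔
    ∀ c' : ZMod m, discrepancy g (-c.val) ≤ discrepancy g (-c'.val) := by
  have hstep (k : ℕ) (hk : k ≤ m) : k * n ≤ m * #{i | (shift g c i : ℕ) + 1 ≤ k} ↔
      discrepancy g (-c.val) ≤ discrepancy g (k - c.val) := by
    have hcard := card_val_add_lt g c hk
    simp only [Nat.add_one_le_iff, shift]
    rw [← Nat.cast_le (α := ℤ)]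
    push_cast
    rw [hcard, discrepancy, discrepancy]
    constructor <;> intro h <;> linarith
  constructor
  · intro hpf c'
    rcases eq_or_ne c c' with rfl | hcc'
    · exact le_rfl
    have hk : (c - c').val ≠ 0 := by simpa [sub_eq_zero] using hcc'
    have := (hstep _ (c - c').val_le).1 (hpf _ (Nat.one_le_iff_ne_zero.2 hk) (c - c').val_le)
    rwa [discrepancy_congr g (a := (c - c').val - c.val) (b := -c'.val)
      (by simp only [Int.cast_sub, Int.cast_neg, Int.cast_natCast, ZMod.natCast_zmod_val,
        sub_sub_cancel_left])] at this
  · intro hmin k hk1 hkm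
    rw [hstep k hkm, discrepancy_congr g (a := k - c.val) (b := -(c - k).val)
      (by simp only [Int.cast_sub, Int.cast_neg, Int.cast_natCast, ZMod.natCast_zmod_val, neg_sub])]
    exact hmin _

lemma discrepancy_neg_val_injective (hmn : m.Coprime n) :
    Function.Injective fun c : ZMod m => discrepancy g (-c.val) := by
  intro c c' h
  simpa using intCast_eq_of_discrepancy_eq g hmn h

lemma existsUnique_isParkingFunction_shift (hmn : m.Coprime n) :
    ∃! c : ZMod m, IsParkingFunction m n (shift g c) := by
  simpa only [isParkingFunction_shift_iff] using
    (discrepancy_neg_val_injective g hmn).existsUnique_forall_le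

lemma shift_natCast_sub (f : Fin n → Fin m) (c : ZMod m) :
    shift (fun i => ((f i : ℕ) : ZMod m) - c) c = f := by
  ext i
  simp [shift, ZMod.val_cast_of_lt (f i).isLt]

lemma natCast_shift_sub (c : ZMod m) : (fun i => ((shift g c i : ℕ) : ZMod m) - c) = g := by
  ext i
  simp [shift]

theorem card_mul_eq_pow (hmn : m.Coprime n) :
    Nat.card {f : Fin n → Fin m // IsParkingFunction m n f} * m = m ^ n := by
  let unshift : {f // IsParkingFunction m n f} × ZMod m → (Fin n → ZMod m) :=
    fun p i => ((p.1.1 i : ℕ) : ZMod m) - p.2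
  have hbij : Function.Bijective unshift := by
    refine ⟨?_, fun g => ?_⟩
    · rintro ⟨⟨f, hf⟩, c⟩ ⟨⟨f', hf'⟩, c'⟩ h
      change (fun i => ((f i : ℕ) : ZMod m) - c) = fun i => ((f' i : ℕ) : ZMod m) - c' at h
      rw [← shift_natCast_sub f c] at hf
      rw [← shift_natCast_sub f' c'] at hf'
      obtain rfl : c = c' :=
        (existsUnique_isParkingFunction_shift _ hmn).unique (h ▸ hf) hf'
      obtain rfl : f = f' := by
        rw [← shift_natCast_sub f c, ← shift_natCast_sub f' c]
        exact congrArg (shift · c) h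
      rfl
    · obtain ⟨c, hc, -⟩ := existsUnique_isParkingFunction_shift g hmn
      exact ⟨(⟨shift g c, hc⟩, c), natCast_shift_sub g c⟩
  calc Nat.card {f // IsParkingFunction m n f} * m
      = Nat.card ({f // IsParkingFunction m n f} × ZMod m) := by
        rw [Nat.card_prod, Nat.card_zmod]
    _ = Nat.card (Fin n → ZMod m) := Nat.card_eq_of_bijective unshift hbij
    _ = m ^ n := by simp

end ParkingFunction

/-- For coprime positive integers `m` and `n`, the number of
`m/n`-parking functions equals `m^{n−1}`. -/
theorem card_parking_functions (m n : ℕ) (hm : 0 < m) (hn : 0 < n)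
    (h : Nat.Coprime m n) :
    Nat.card {f : Fin n → Fin m // IsParkingFunction m n f} = m ^ (n - 1) := by
  have : NeZero m := ⟨hm.ne'⟩
  refine Nat.eq_of_mul_eq_mul_right hm ?_
  rw [ParkingFunction.card_mul_eq_pow h, ← pow_succ, Nat.sub_add_cancel hn]
end

section
/- Let m and n be coprime positive integers. For every function f : {1,…,n} → {1,…,m}, there is exactly one residue r ∈ {0,1,…,m−1} such that the cyclically shifted function i ↦ ((f(i) + r − 1) mod m) + 1 is an m/n-parking function. -/
namespace ParkAux

/-- Number of indices with value `< j`. -/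
def cntF (m n : ℕ) (f : Fin n → Fin m) (j : ℕ) : ℕ :=
  (Finset.univ.filter fun i : Fin n => (f i : ℕ) < j).card

/-- The "height" function `G j = m·cnt(j) − j·n`. -/
def GF (m n : ℕ) (f : Fin n → Fin m) (j : ℕ) : ℤ :=
  (m : ℤ) * cntF m n f j - (j : ℤ) * n

lemma mod2 (m a : ℕ) (hm : 0 < m) (ha : a < 2 * m) :
    a % m < m ∧ (a % m = a ∨ a % m + m = a) := by
  refine ⟨Nat.mod_lt _ hm, ?_⟩
  rcases Nat.lt_or_ge a m with h | h
  · left; exact Nat.mod_eq_of_lt h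
  · right
    rw [Nat.mod_eq_sub_mod h, Nat.mod_eq_of_lt (by omega)]
    omega

lemma sub_mod (m r : ℕ) (hm : 0 < m) (hr : r < m) :
    (m - r) % m < m ∧ ((m - r) % m = m - r ∨ (r = 0 ∧ (m - r) % m = 0)) := by
  refine ⟨Nat.mod_lt _ hm, ?_⟩
  rcases Nat.eq_zero_or_pos r with h | h
  · right; subst h; simp
  · left; exact Nat.mod_eq_of_lt (by omega)

lemma ind_eq (m v r k : ℕ) (hm : 0 < m) (hv : v < m) (hr : r < m)
    (hk1 : 1 ≤ k) (hk2 : k ≤ m) :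
    (if (v + r) % m < k then (1 : ℕ) else 0) + (if v < (m - r) % m then 1 else 0)
      = (if v < (k + (m - r) % m) % m then 1 else 0)
        + (if m ≤ k + (m - r) % m then 1 else 0) := by
  obtain ⟨h1, h2⟩ := mod2 m (v + r) hm (by omega)
  obtain ⟨h3, h4⟩ := sub_mod m r hm hr
  obtain ⟨h5, h6⟩ := mod2 m (k + (m - r) % m) hm (by omega)
  split_ifs <;> omega

lemma card_shift (m n : ℕ) (f : Fin n → Fin m) (r k : ℕ) (hm : 0 < m)
    (hr : r < m) (hk1 : 1 ≤ k) (hk2 : k ≤ m) :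
    (Finset.univ.filter fun i : Fin n => ((f i : ℕ) + r) % m < k).card
        + cntF m n f ((m - r) % m)
      = cntF m n f ((k + (m - r) % m) % m)
        + (if m ≤ k + (m - r) % m then n else 0) := by
  classical
  unfold cntF
  rw [Finset.card_filter, Finset.card_filter, Finset.card_filter,
    ← Finset.sum_add_distrib]
  have key : ∀ i : Fin n,
      (if ((f i : ℕ) + r) % m < k then (1 : ℕ) else 0)
          + (if (f i : ℕ) < (m - r) % m then 1 else 0)
        = (if (f i : ℕ) < (k + (m - r) % m) % m then 1 else 0)
          + (if m ≤ k + (m - r) % m then 1 else 0) :=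
    fun i => ind_eq m (f i) r k hm (f i).isLt hr hk1 hk2
  rw [Finset.sum_congr rfl (fun i _ => key i), Finset.sum_add_distrib]
  congr 1
  split <;> simp

lemma G_shift (m n : ℕ) (f : Fin n → Fin m) (r k : ℕ) (hm : 0 < m)
    (hr : r < m) (hk1 : 1 ≤ k) (hk2 : k ≤ m) :
    (m : ℤ) * (Finset.univ.filter fun i : Fin n => ((f i : ℕ) + r) % m < k).card
        - (k : ℤ) * n
      = GF m n f ((k + (m - r) % m) % m) - GF m n f ((m - r) % m) := by
  have hcs := card_shift m n f r k hm hr hk1 hk2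
  set s := (m - r) % m with hsdef
  obtain ⟨h5, h6⟩ := mod2 m (k + s) hm
    (by have := (sub_mod m r hm hr).1; rw [← hsdef] at this; omega)
  unfold GF
  rcases h6 with h6 | h6
  · rw [if_neg (by omega)] at hcs
    have hcs' : ((Finset.univ.filter fun i : Fin n =>
        ((f i : ℕ) + r) % m < k).card : ℤ) + cntF m n f s
        = cntF m n f ((k + s) % m) := by exact_mod_cast hcs
    have ht : (((k + s) % m : ℕ) : ℤ) = (k : ℤ) + (s : ℤ) := by exact_mod_cast h6
    linear_combination (m : ℤ) * hcs' + (n : ℤ) * ht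
  · rw [if_pos (by omega)] at hcs
    have hcs' : ((Finset.univ.filter fun i : Fin n =>
        ((f i : ℕ) + r) % m < k).card : ℤ) + cntF m n f s
        = cntF m n f ((k + s) % m) + n := by exact_mod_cast hcs
    have ht : (((k + s) % m : ℕ) : ℤ) + m = (k : ℤ) + (s : ℤ) := by
      exact_mod_cast h6
    linear_combination (m : ℤ) * hcs' + (n : ℤ) * ht

lemma park_card (m n : ℕ) (f : Fin n → Fin m) (r : Fin m) (k : ℕ) :
    (Finset.univ.filter fun i : Fin n => ((f i + r : Fin m) : ℕ) + 1 ≤ k).card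
      = (Finset.univ.filter fun i : Fin n => ((f i : ℕ) + (r : ℕ)) % m < k).card := by
  apply Finset.card_bij (fun i _ => i) <;> intro i
  · intro hi
    simp only [Finset.mem_filter, Finset.mem_univ, true_and] at hi ⊢
    rw [Fin.val_add] at hi; omega
  · intro j hi hj hij; exact hij
  · intro hi
    refine ⟨i, ?_, rfl⟩
    simp only [Finset.mem_filter, Finset.mem_univ, true_and] at hi ⊢
    rw [Fin.val_add]; omega

lemma parking_iff (m n : ℕ) (f : Fin n → Fin m) (hm : 0 < m) (r : Fin m) :
    IsParkingFunction m n (fun i => f i + r) ↔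
      ∀ j < m, GF m n f ((m - (r : ℕ)) % m) ≤ GF m n f j := by
  constructor
  · intro hp j hj
    set s := (m - (r : ℕ)) % m with hs
    have hslt : s < m := Nat.mod_lt _ hm
    -- choose k with 1 ≤ k ≤ m and (k + s) % m = j
    obtain ⟨k, hk1, hk2, hkj⟩ : ∃ k, 1 ≤ k ∧ k ≤ m ∧ (k + s) % m = j := by
      rcases Nat.lt_or_ge s j with hlt | hge
      · exact ⟨j - s, by omega, by omega, by
          rw [Nat.sub_add_cancel (le_of_lt hlt)]; exact Nat.mod_eq_of_lt hj⟩
      · refine ⟨j + m - s, by omega, by omega, ?_⟩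
        have : j + m - s + s = j + m := by omega
        rw [this, Nat.add_mod_right]; exact Nat.mod_eq_of_lt hj
    have hp' := hp k hk1 hk2
    rw [park_card m n f r k] at hp'
    have hg := G_shift m n f (r : ℕ) k hm r.isLt hk1 hk2
    rw [← hs, hkj] at hg
    have : (0 : ℤ) ≤ GF m n f j - GF m n f s := by
      rw [← hg]
      have : ((k * n : ℕ) : ℤ) ≤ ((m * (Finset.univ.filter fun i : Fin n =>
          ((f i : ℕ) + (r : ℕ)) % m < k).card : ℕ) : ℤ) := by exact_mod_cast hp'
      push_cast at this
      linarith
    linarith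
  · intro hmin k hk1 hk2
    set s := (m - (r : ℕ)) % m with hs
    have hg := G_shift m n f (r : ℕ) k hm r.isLt hk1 hk2
    rw [← hs] at hg
    have ht : (k + s) % m < m := Nat.mod_lt _ hm
    have h0 : (0 : ℤ) ≤ GF m n f ((k + s) % m) - GF m n f s := by
      have := hmin ((k + s) % m) ht
      linarith
    rw [park_card m n f r k]
    have : (0 : ℤ) ≤ (m : ℤ) * (Finset.univ.filter fun i : Fin n =>
        ((f i : ℕ) + (r : ℕ)) % m < k).card - (k : ℤ) * n := by
      rw [hg]; linarith
    have h2 : ((k : ℤ) * n) ≤ (m : ℤ) * (Finset.univ.filter fun i : Fin n =>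
        ((f i : ℕ) + (r : ℕ)) % m < k).card := by linarith
    exact_mod_cast h2

lemma G_inj (m n : ℕ) (f : Fin n → Fin m) (h : Nat.Coprime m n)
    {j1 j2 : ℕ} (h1 : j1 < m) (h2 : j2 < m)
    (he : GF m n f j1 = GF m n f j2) : j1 = j2 := by
  unfold GF at he
  wlog hle : j2 ≤ j1 generalizing j1 j2
  · exact (this h2 h1 he.symm (by omega)).symm
  have hmono : cntF m n f j2 ≤ cntF m n f j1 := by
    apply Finset.card_le_card
    intro i hi
    simp only [Finset.mem_filter, Finset.mem_univ, true_and] at hi ⊢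
    omega
  have hz : ((m * (cntF m n f j1 - cntF m n f j2) : ℕ) : ℤ)
      = (((j1 - j2) * n : ℕ) : ℤ) := by
    push_cast [Nat.cast_sub hmono, Nat.cast_sub hle]
    linarith [he]
  have hdvd : m ∣ (j1 - j2) * n := ⟨_, (Nat.cast_inj.mp hz).symm⟩
  have hd2 := Nat.Coprime.dvd_of_dvd_mul_right h hdvd
  have hsub : j1 - j2 = 0 := by
    by_contra hne
    have := Nat.le_of_dvd (Nat.pos_of_ne_zero hne) hd2
    omega
  omega

lemma invol (m a : ℕ) (hm : 0 < m) (ha : a < m) :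
    (m - (m - a) % m) % m = a := by
  rcases Nat.eq_zero_or_pos a with h | h
  · subst h; simp
  · rw [Nat.mod_eq_of_lt (show m - a < m by omega),
      Nat.sub_sub_self (le_of_lt ha), Nat.mod_eq_of_lt ha]

end ParkAux

/-- For coprime positive integers `m`, `n` and any
`f : {1,…,n} → {1,…,m}`, there is exactly one residue `r ∈ {0,…,m−1}` such that
the cyclic shift `i ↦ ((f(i) + r − 1) mod m) + 1` is an `m/n`-parking function.
In the `Fin m` encoding (value `v : Fin m` representing `v + 1`), the shift by the
residue `r : Fin m` is exactly `i ↦ f i + r` using addition in `Fin m`. -/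
theorem existsUnique_parking_shift (m n : ℕ) (hm : 0 < m) (hn : 0 < n)
    (h : Nat.Coprime m n) (f : Fin n → Fin m) :
    ∃! r : Fin m, IsParkingFunction m n (fun i => f i + r) := by
  classical
  obtain ⟨s₀, hs₀mem, hs₀min⟩ :=
    Finset.exists_min_image (Finset.range m) (ParkAux.GF m n f)
      ⟨0, Finset.mem_range.mpr hm⟩
  rw [Finset.mem_range] at hs₀mem
  have hr₀ : (m - s₀) % m < m := Nat.mod_lt _ hm
  refine ⟨⟨(m - s₀) % m, hr₀⟩, ?_, ?_⟩
  · have hpark := (ParkAux.parking_iff m n f hm ⟨(m - s₀) % m, hr₀⟩).mpr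
    refine hpark ?_
    intro j hj
    have hinv : (m - ((m - s₀) % m)) % m = s₀ := ParkAux.invol m s₀ hm hs₀mem
    have : ((⟨(m - s₀) % m, hr₀⟩ : Fin m) : ℕ) = (m - s₀) % m := rfl
    rw [this, hinv]
    exact hs₀min j (Finset.mem_range.mpr hj)
  · intro r' hr'
    replace hr' : IsParkingFunction m n fun i => f i + r' := hr'
    rw [ParkAux.parking_iff m n f hm] at hr'
    set s' := (m - (r' : ℕ)) % m with hs'
    have hs'lt : s' < m := Nat.mod_lt _ hm
    have h1 : ParkAux.GF m n f s' ≤ ParkAux.GF m n f s₀ := hr' s₀ hs₀mem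
    have h2 : ParkAux.GF m n f s₀ ≤ ParkAux.GF m n f s' :=
      hs₀min s' (Finset.mem_range.mpr hs'lt)
    have heq : s' = s₀ := ParkAux.G_inj m n f h hs'lt hs₀mem (le_antisymm h1 h2)
    apply Fin.ext
    show (r' : ℕ) = (m - s₀) % m
    rw [← heq, hs', ParkAux.invol m (r' : ℕ) hm r'.isLt]
end

section
/- For every k ≥ 1 and every l with 0 ≤ l ≤ n, the normalized Olshanetsky–Perelomov operator acts on elementary symmetric polynomials by P_k(e_l) = (n−l+1)(n−l+2)⋯(n−l+k) · e_{l−k}; in particular P_k(e_l) = 0 when k > l. -/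
open MvPolynomial Finset

noncomputable def esub (n : ℕ) (s : Finset (Fin n)) (m : ℕ) : MvPolynomial (Fin n) ℚ :=
  ∑ t ∈ s.powersetCard m, ∏ i ∈ t, X i

lemma esub_univ (n m : ℕ) : esub n Finset.univ m = esymm (Fin n) ℚ m := rfl

lemma esub_zero (n : ℕ) (s : Finset (Fin n)) : esub n s 0 = 1 := by
  simp [esub]

lemma esub_insert {n : ℕ} {s : Finset (Fin n)} {j : Fin n} (hj : j ∉ s) (m : ℕ) :
    esub n (insert j s) (m + 1) = esub n s (m + 1) + X j * esub n s m := by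
  classical
  have hdisj : Disjoint (s.powersetCard (m + 1)) ((s.powersetCard m).image (insert j)) := by
    rw [Finset.disjoint_left]
    intro t ht ht'
    obtain ⟨u, hu, rfl⟩ := Finset.mem_image.mp ht'
    exact hj ((Finset.mem_powersetCard.mp ht).1 (Finset.mem_insert_self j u))
  rw [esub, Finset.powersetCard_succ_insert hj, Finset.sum_union hdisj, Finset.sum_image]
  · rw [esub, esub, Finset.mul_sum]
    congr 1
    refine Finset.sum_congr rfl fun t ht => ?_
    exact Finset.prod_insert fun h => hj ((Finset.mem_powersetCard.mp ht).1 h)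
  · intro t ht u hu h
    have hjt : j ∉ t := fun h' => hj ((Finset.mem_powersetCard.mp ht).1 h')
    have hju : j ∉ u := fun h' => hj ((Finset.mem_powersetCard.mp hu).1 h')
    rw [← Finset.erase_insert hjt, ← Finset.erase_insert hju, h]

lemma esub_erase {n : ℕ} {s : Finset (Fin n)} {j : Fin n} (hj : j ∈ s) (m : ℕ) :
    esub n s (m + 1) = esub n (s.erase j) (m + 1) + X j * esub n (s.erase j) m := by
  conv_lhs => rw [← Finset.insert_erase hj]
  exact esub_insert (Finset.notMem_erase j s) m

lemma pderiv_prod_X_notMem {n : ℕ} {i : Fin n} {t : Finset (Fin n)} (h : i ∉ t) :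
    pderiv i (∏ a ∈ t, (X a : MvPolynomial (Fin n) ℚ)) = 0 := by
  classical
  induction t using Finset.induction_on with
  | empty => simp
  | @insert a s ha ih =>
    rw [Finset.prod_insert ha, pderiv_mul,
      pderiv_X_of_ne (by rintro rfl; exact h (Finset.mem_insert_self a s)),
      ih fun h' => h (Finset.mem_insert_of_mem h')]
    ring

lemma pderiv_esub {n : ℕ} {i : Fin n} {s : Finset (Fin n)} (h : i ∉ s) (m : ℕ) :
    pderiv i (esub n s m) = 0 := by
  rw [esub, map_sum]
  refine Finset.sum_eq_zero fun t ht => ?_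
  exact pderiv_prod_X_notMem fun h' => h ((Finset.mem_powersetCard.mp ht).1 h')

lemma pderiv_esymm' {n : ℕ} (i : Fin n) (m : ℕ) :
    pderiv i (esymm (Fin n) ℚ (m + 1)) = esub n (Finset.univ.erase i) m := by
  rw [← esub_univ, esub_erase (Finset.mem_univ i) m, map_add,
    pderiv_esub (Finset.notMem_erase i _), pderiv_mul, pderiv_X_self,
    pderiv_esub (Finset.notMem_erase i _)]
  ring

lemma rename_esub {n : ℕ} (e : Equiv.Perm (Fin n)) (s : Finset (Fin n)) (m : ℕ) :
    rename e (esub n s m) = esub n (s.map e.toEmbedding) m := by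
  rw [esub, map_sum, esub, Finset.powersetCard_map, Finset.sum_map]
  refine Finset.sum_congr rfl fun t ht => ?_
  simp only [RelEmbedding.coe_toEmbedding]
  rw [map_prod, Finset.mapEmbedding_apply, Finset.prod_map]
  simp [rename_X]

lemma map_swap_erase {n : ℕ} {i j : Fin n} :
    (Finset.univ.erase i).map (Equiv.swap i j).toEmbedding = Finset.univ.erase j := by
  rw [Finset.map_eq_image]
  have h1 : Finset.image (⇑(Equiv.swap i j)) (Finset.univ.erase i)
      = (Finset.image (⇑(Equiv.swap i j)) Finset.univ).erase (Equiv.swap i j i) :=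
    (Finset.image_erase (Equiv.swap i j).injective _ _)
  simpa [Equiv.swap_apply_left] using h1

lemma X_sub_ne {n : ℕ} {i j : Fin n} (hij : i ≠ j) :
    (X i - X j : MvPolynomial (Fin n) ℚ) ≠ 0 :=
  sub_ne_zero.mpr fun h => hij (MvPolynomial.X_injective h)

lemma sum_esub_erase {n : ℕ} (s : Finset (Fin n)) (m : ℕ) :
    ∑ j ∈ s, esub n (s.erase j) m = ((s.card - m : ℕ) : ℚ) • esub n s m := by
  classical
  have hpc : ∀ j ∈ s, (s.erase j).powersetCard m
      = (s.powersetCard m).filter (fun t => j ∉ t) := by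
    intro j hj
    ext t
    simp only [Finset.mem_powersetCard, Finset.mem_filter, Finset.subset_erase]
    tauto
  calc ∑ j ∈ s, esub n (s.erase j) m
      = ∑ j ∈ s, ∑ t ∈ s.powersetCard m,
          if j ∉ t then ∏ a ∈ t, (X a : MvPolynomial (Fin n) ℚ) else 0 := by
        refine Finset.sum_congr rfl fun j hj => ?_
        rw [esub, hpc j hj, Finset.sum_filter]
    _ = ∑ t ∈ s.powersetCard m, ∑ j ∈ s,
          if j ∉ t then ∏ a ∈ t, (X a : MvPolynomial (Fin n) ℚ) else 0 := Finset.sum_comm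
    _ = ∑ t ∈ s.powersetCard m, ((s.card - m : ℕ) : ℚ) • ∏ a ∈ t, X a := by
        refine Finset.sum_congr rfl fun t ht => ?_
        obtain ⟨hts, htc⟩ := Finset.mem_powersetCard.mp ht
        rw [← Finset.sum_filter, Finset.sum_const, ← Finset.sdiff_eq_filter,
          Finset.card_sdiff_of_subset hts, htc, Nat.cast_smul_eq_nsmul]
    _ = ((s.card - m : ℕ) : ℚ) • esub n s m := by rw [esub, Finset.smul_sum]

lemma asc_step (a r : ℕ) :
    ∏ t ∈ Finset.Icc 1 (r + 1), (a + t) = (a + 1) * ∏ t ∈ Finset.Icc 1 r, (a + 1 + t) := by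
  rw [← Finset.Ico_add_one_right_eq_Icc, ← Finset.Ico_add_one_right_eq_Icc, Finset.prod_Ico_eq_prod_range,
    Finset.prod_Ico_eq_prod_range]
  have h1 : r + 1 + 1 - 1 = r + 1 := by omega
  have h2 : r + 1 - 1 = r := by omega
  rw [h1, h2, Finset.prod_range_succ', mul_comm]
  congr 1
  exact Finset.prod_congr rfl fun x _ => by omega

section DeltaD

variable {n : ℕ}
  (Δ : Fin n → Fin n → MvPolynomial (Fin n) ℚ → MvPolynomial (Fin n) ℚ)
  (hΔ : ∀ i j p, (X i - X j) * Δ i j p = rename (Equiv.swap i j) p - p)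
include hΔ

lemma delta_eq {i j : Fin n} (hij : i ≠ j) {p q : MvPolynomial (Fin n) ℚ}
    (h : rename (Equiv.swap i j) p - p = (X i - X j) * q) : Δ i j p = q :=
  mul_left_cancel₀ (X_sub_ne hij) (by rw [hΔ i j p, h])

lemma delta_zero {i j : Fin n} (hij : i ≠ j) : Δ i j 0 = 0 :=
  delta_eq Δ hΔ hij (by simp)

lemma delta_one {i j : Fin n} (hij : i ≠ j) : Δ i j 1 = 0 :=
  delta_eq Δ hΔ hij (by simp)

lemma delta_smul {i j : Fin n} (hij : i ≠ j) (a : ℚ) (p : MvPolynomial (Fin n) ℚ) :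
    Δ i j (a • p) = a • Δ i j p :=
  delta_eq Δ hΔ hij (by rw [map_smul, ← smul_sub, ← hΔ i j p, mul_smul_comm])

lemma delta_esub {i j : Fin n} (hij : i ≠ j) (m : ℕ) :
    Δ i j (esub n (Finset.univ.erase i) (m + 1))
      = esub n ((Finset.univ.erase i).erase j) m := by
  refine delta_eq Δ hΔ hij ?_
  rw [rename_esub, map_swap_erase]
  rw [esub_erase (s := Finset.univ.erase j) (j := i)
      (Finset.mem_erase.mpr ⟨hij, Finset.mem_univ i⟩) m,
    esub_erase (s := Finset.univ.erase i) (j := j)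
      (Finset.mem_erase.mpr ⟨hij.symm, Finset.mem_univ j⟩) m,
    Finset.erase_right_comm]
  ring

variable (D : Fin n → MvPolynomial (Fin n) ℚ → MvPolynomial (Fin n) ℚ)
  (hD : ∀ i p, D i p = ∑ j ∈ Finset.univ.erase i, Δ i j p)
include hD

lemma D_zero (i : Fin n) : D i 0 = 0 := by
  rw [hD]
  exact Finset.sum_eq_zero fun j hj =>
    delta_zero Δ hΔ (Ne.symm (Finset.mem_erase.mp hj).1)

lemma D_smul (i : Fin n) (a : ℚ) (p : MvPolynomial (Fin n) ℚ) :
    D i (a • p) = a • D i p := by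
  rw [hD, hD, Finset.smul_sum]
  exact Finset.sum_congr rfl fun j hj =>
    delta_smul Δ hΔ (Ne.symm (Finset.mem_erase.mp hj).1) a p

lemma D_iter_zero (i : Fin n) (r : ℕ) : (D i)^[r] 0 = 0 := by
  induction r with
  | zero => rfl
  | succ r ih => rw [Function.iterate_succ_apply, D_zero Δ hΔ D hD i, ih]

lemma D_iter_smul (i : Fin n) (r : ℕ) (a : ℚ) (p : MvPolynomial (Fin n) ℚ) :
    (D i)^[r] (a • p) = a • (D i)^[r] p := by
  induction r generalizing p with
  | zero => rfl
  | succ r ih =>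
    rw [Function.iterate_succ_apply, D_smul Δ hΔ D hD i a p,
      Function.iterate_succ_apply, ih]

lemma D_esub_succ (i : Fin n) (m : ℕ) :
    D i (esub n (Finset.univ.erase i) (m + 1))
      = ((n - 1 - m : ℕ) : ℚ) • esub n (Finset.univ.erase i) m := by
  rw [hD, Finset.sum_congr rfl
      (fun j hj => delta_esub Δ hΔ (Ne.symm (Finset.mem_erase.mp hj).1) m),
    sum_esub_erase, Finset.card_erase_of_mem (Finset.mem_univ i),
    Finset.card_univ, Fintype.card_fin]

lemma D_esub_zero (i : Fin n) : D i (esub n (Finset.univ.erase i) 0) = 0 := by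
  rw [esub_zero, hD]
  exact Finset.sum_eq_zero fun j hj =>
    delta_one Δ hΔ (Ne.symm (Finset.mem_erase.mp hj).1)

lemma D_iter_esub (i : Fin n) (r : ℕ) : ∀ m : ℕ, m < n →
    (D i)^[r] (esub n (Finset.univ.erase i) m)
      = (∏ t ∈ Finset.Icc 1 r, ((n - 1 - m + t : ℕ) : ℚ)) •
          (if r ≤ m then esub n (Finset.univ.erase i) (m - r) else 0) := by
  induction r with
  | zero => intro m hm; simp
  | succ r ih =>
    intro m hm
    rw [Function.iterate_succ_apply]
    cases m with
    | zero =>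
      rw [D_esub_zero Δ hΔ D hD i, D_iter_zero Δ hΔ D hD i r]
      simp
    | succ m' =>
      have hcoefN : (n - 1 - m') * ∏ t ∈ Finset.Icc 1 r, (n - 1 - m' + t)
          = ∏ t ∈ Finset.Icc 1 (r + 1), (n - 1 - (m' + 1) + t) := by
        have ha : n - 1 - (m' + 1) + 1 = n - 1 - m' := by omega
        rw [asc_step (n - 1 - (m' + 1)) r]
        simp only [ha]
      have hcoef : ((n - 1 - m' : ℕ) : ℚ) * ∏ t ∈ Finset.Icc 1 r, ((n - 1 - m' + t : ℕ) : ℚ)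
          = ∏ t ∈ Finset.Icc 1 (r + 1), ((n - 1 - (m' + 1) + t : ℕ) : ℚ) := by
        rw [← Nat.cast_prod, ← Nat.cast_prod, ← Nat.cast_mul, hcoefN]
      rw [D_esub_succ Δ hΔ D hD i m', D_iter_smul Δ hΔ D hD i r _ _,
        ih m' (by omega), smul_smul, hcoef]
      congr 1
      by_cases h : r + 1 ≤ m' + 1
      · rw [if_pos h, if_pos (by omega : r ≤ m')]
        congr 1
        omega
      · rw [if_neg h, if_neg (by omega : ¬ r ≤ m')]

end DeltaD

/-- The normalized Olshanetsky–Perelomov operator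
`P_k(f) = ∑_i 𝔇_i^{k−1}(∂f/∂x_i)`, built from the degenerate Dunkl operators
`𝔇_i(p) = ∑_{j≠i} (s_{ij}p − p)/(x_i − x_j)`, acts on elementary symmetric
polynomials by `P_k(e_l) = (n−l+1)(n−l+2)⋯(n−l+k)·e_{l−k}` (with `e_{l−k} = 0`
when `k > l`).  The difference quotient `(s_{ij}p − p)/(x_i − x_j)` is encoded by
a function `Δ` with `(x_i − x_j)·Δ i j p = s_{ij}p − p`. -/
theorem OP_hamiltonian_on_esymm (n : ℕ) (hn : 1 ≤ n)
    (Δ : Fin n → Fin n → MvPolynomial (Fin n) ℚ → MvPolynomial (Fin n) ℚ)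
    (hΔ : ∀ i j p, (X i - X j) * Δ i j p = rename (Equiv.swap i j) p - p)
    (D : Fin n → MvPolynomial (Fin n) ℚ → MvPolynomial (Fin n) ℚ)
    (hD : ∀ i p, D i p = ∑ j ∈ Finset.univ.erase i, Δ i j p)
    (P : ℕ → MvPolynomial (Fin n) ℚ → MvPolynomial (Fin n) ℚ)
    (hP : ∀ k f, P k f = ∑ i : Fin n, (D i)^[k - 1] (pderiv i f))
    (k : ℕ) (hk : 1 ≤ k) (l : ℕ) (hl : l ≤ n) :
    P k (esymm (Fin n) ℚ l)
      = (∏ t ∈ Finset.Icc 1 k, ((n - l + t : ℕ) : ℚ)) •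
          (if k ≤ l then esymm (Fin n) ℚ (l - k) else 0) := by
  obtain ⟨kk, rfl⟩ : ∃ kk, k = kk + 1 := ⟨k - 1, by omega⟩
  rw [hP]
  simp only [Nat.add_sub_cancel]
  cases l with
  | zero =>
    rw [if_neg (by omega), smul_zero]
    refine Finset.sum_eq_zero fun i _ => ?_
    have h0 : pderiv i (esymm (Fin n) ℚ 0) = 0 := by
      rw [← esub_univ, esub_zero]; simp
    rw [h0, D_iter_zero Δ hΔ D hD i kk]
  | succ m =>
    have hmn : m < n := by omega
    rw [Finset.sum_congr rfl (fun i _ => by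
      rw [pderiv_esymm', D_iter_esub Δ hΔ D hD i kk m hmn]), ← Finset.smul_sum]
    by_cases hkl : kk + 1 ≤ m + 1
    · have hkm : kk ≤ m := by omega
      rw [if_pos hkl]
      simp only [if_pos hkm]
      rw [Finset.sum_congr rfl (fun i _ => rfl), sum_esub_erase Finset.univ (m - kk),
        Finset.card_univ, Fintype.card_fin, esub_univ, smul_smul]
      have hidx : m + 1 - (kk + 1) = m - kk := by omega
      rw [hidx]
      congr 1
      have hN : (∏ t ∈ Finset.Icc 1 kk, (n - 1 - m + t)) * (n - (m - kk))
          = ∏ t ∈ Finset.Icc 1 (kk + 1), (n - (m + 1) + t) := by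
        rw [Finset.prod_Icc_succ_top (by omega : 1 ≤ kk + 1)]
        have h1 : n - (m + 1) + (kk + 1) = n - (m - kk) := by omega
        have h2 : ∀ t ∈ Finset.Icc 1 kk, n - (m + 1) + t = n - 1 - m + t :=
          fun t _ => by omega
        rw [h1, Finset.prod_congr rfl h2]
      calc (∏ t ∈ Finset.Icc 1 kk, ((n - 1 - m + t : ℕ) : ℚ)) * ((n - (m - kk) : ℕ) : ℚ)
          = (((∏ t ∈ Finset.Icc 1 kk, (n - 1 - m + t)) * (n - (m - kk)) : ℕ) : ℚ) := by
            push_cast; ring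
        _ = _ := by rw [hN]; push_cast; ring
    · rw [if_neg hkl]
      simp only [if_neg (show ¬ kk ≤ m by omega)]
      simp
end

section
/- Define (ξ_k)_i = (1/(k+1))·∂u_k/∂x_i for k ≥ 0 and 1 ≤ i ≤ n. Then for every k ≥ 0 and every i, the following identity of polynomials holds: x_i·(ξ_k)_i = ∑_{j=0}^{k} u_j·(ξ_{k−j})_i + (n−k−1)·(ξ_{k+1})_i. -/
/-!
Write `L = −log Ē` and `∂ᵢ` for `∂/∂xᵢ` applied coefficientwise, so that `L' = ∑ u_k z^k` and
`∂ᵢL = ∑ (ξ_k)ᵢ z^{k+1}`. Differentiating `log` gives `Ē·L' = −Ē'` and `Ē·∂ᵢL = −∂ᵢĒ`. On the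
other hand `Ē` satisfies the linear equation `z(∂ᵢĒ)' + xᵢ z ∂ᵢĒ = (n+1)∂ᵢĒ + zĒ`: coefficientwise
this is `∂ᵢe_{l+1} + xᵢ∂ᵢe_l = e_l` combined with `(n−l)·(n−l−1)! = (n−l)!`. Substituting the two
logarithmic identities turns it into `z(xᵢ∂ᵢL + (∂ᵢL)' + 1) = z L' ∂ᵢL + (n+1)∂ᵢL`, whose
coefficient of `z^{k+2}` is the recursion.
-/

noncomputable section

open MvPolynomial

/-- The power series `Ē(z) = ∑_{l=0}^n (−1)^l·((n−l)!/n!)·e_l·z^l` over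
`ℚ[x₁,…,xₙ]`. -/
def Ebar (n : ℕ) : PowerSeries (MvPolynomial (Fin n) ℚ) :=
  ∑ l ∈ Finset.range (n + 1),
    PowerSeries.monomial l
      (C ((-1 : ℚ) ^ l * ((n - l).factorial : ℚ) / (n.factorial : ℚ)) *
        esymm (Fin n) ℚ l)

/-- The symmetric polynomials `u_k` defined by `−log Ē(z) = ∑_{k≥0} u_k·z^{k+1}/(k+1)`,
i.e. `u_k` is `(k+1)` times the coefficient of `z^{k+1}` in
`−log Ē(z) = ∑_{m≥1} (1 − Ē(z))^m/m` (only the terms with `1 ≤ m ≤ k+1` contribute,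
and the `m = 0` summand below vanishes since `(0 : ℚ)⁻¹ = 0`). -/
def uPoly (n k : ℕ) : MvPolynomial (Fin n) ℚ :=
  ((k : ℚ) + 1) • ∑ m ∈ Finset.range (k + 2),
    ((m : ℚ))⁻¹ • PowerSeries.coeff (k + 1) ((1 - Ebar n) ^ m)

/-- `(ξ_k)_i = (1/(k+1))·∂u_k/∂x_i`. -/
def xiPoly (n k : ℕ) (i : Fin n) : MvPolynomial (Fin n) ℚ :=
  ((k : ℚ) + 1)⁻¹ • pderiv i (uPoly n k)

open Finset
open scoped PowerSeries

theorem Multiset.esymm_cons_succ {R : Type*} [CommSemiring R] (a : R) (s : Multiset R) (l : ℕ) :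
    (a ::ₘ s).esymm (l + 1) = s.esymm (l + 1) + a * s.esymm l := by
  simp [Multiset.esymm, Multiset.powersetCard_cons, Multiset.sum_map_mul_left]

namespace Derivation

section

variable {R A : Type*} [CommSemiring R] [CommSemiring A] [Algebra R A]

theorem map_multiset_esymm_eq_zero {M : Type*} [AddCommMonoid M] [Module A M] [Module R M]
    (D : Derivation R A M) {s : Multiset A} (hs : ∀ a ∈ s, D a = 0) (l : ℕ) :
    D (s.esymm l) = 0 := by
  induction s using Multiset.induction_on generalizing l with
  | empty => cases l <;> simp [Multiset.esymm, Multiset.powersetCard_zero_right]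
  | cons a s ih =>
    have hs' : ∀ b ∈ s, D b = 0 := fun b hb => hs b (Multiset.mem_cons_of_mem hb)
    cases l with
    | zero => simp [Multiset.esymm]
    | succ l =>
      rw [Multiset.esymm_cons_succ, map_add, leibniz, hs a (Multiset.mem_cons_self a s),
        ih hs', ih hs']
      simp

theorem pow_dvd_map_of_pow_succ_dvd (D : Derivation R A A) {a g : A} {k : ℕ}
    (h : a ^ (k + 1) ∣ g) : a ^ k ∣ D g := by
  obtain ⟨g, rfl⟩ := h
  rw [leibniz, leibniz_pow, Nat.add_sub_cancel, smul_eq_mul, smul_eq_mul, smul_eq_mul,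
    nsmul_eq_mul]
  exact ⟨a * D g + g * ((k + 1 : ℕ) * D a), by ring⟩

end

variable {S R : Type*} [CommSemiring S] [CommRing R] [Algebra S R]

def mapPowerSeries (D : Derivation S R R) : Derivation S R⟦X⟧ R⟦X⟧ :=
  Derivation.mk'
    { toFun := fun f => PowerSeries.mk fun N => D (PowerSeries.coeff N f)
      map_add' := fun f g => by ext N; simp
      map_smul' := fun s f => by ext N; simp }
    fun f g => by
      ext N
      rw [smul_eq_mul, smul_eq_mul, mul_comm g]
      simp only [LinearMap.coe_mk, AddHom.coe_mk, map_add, PowerSeries.coeff_mul,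
        PowerSeries.coeff_mk, map_sum, ← sum_add_distrib, leibniz]
      exact sum_congr rfl fun p _ => by ring

@[simp]
theorem coeff_mapPowerSeries (D : Derivation S R R) (f : R⟦X⟧) (N : ℕ) :
    PowerSeries.coeff N (D.mapPowerSeries f) = D (PowerSeries.coeff N f) :=
  PowerSeries.coeff_mk N fun N => D (PowerSeries.coeff N f)

theorem constantCoeff_mapPowerSeries (D : Derivation S R R) (f : R⟦X⟧) :
    PowerSeries.constantCoeff (D.mapPowerSeries f) = D (PowerSeries.constantCoeff f) := by
  simp only [← PowerSeries.coeff_zero_eq_constantCoeff_apply, coeff_mapPowerSeries]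

end Derivation

namespace MvPolynomial

variable {σ R : Type*} [Fintype σ] [CommSemiring R]

theorem esymm_eq_zero_of_card_lt {l : ℕ} (h : Fintype.card σ < l) : esymm σ R l = 0 := by
  rw [esymm, powersetCard_eq_empty.mpr (by simpa using h), sum_empty]

variable [DecidableEq σ]

theorem esymm_succ_eq_esymm_erase (i : σ) (l : ℕ) :
    esymm σ R (l + 1) = ((univ.erase i).val.map X).esymm (l + 1)
      + X i * ((univ.erase i).val.map X).esymm l := by
  rw [esymm_eq_multiset_esymm, ← Multiset.esymm_cons_succ, ← Multiset.map_cons,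
    ← insert_val_of_notMem (notMem_erase i univ), insert_erase (mem_univ i)]

theorem pderiv_esymm_succ (i : σ) (l : ℕ) :
    pderiv i (esymm σ R (l + 1)) = ((univ.erase i).val.map X).esymm l := by
  have hconst : ∀ m, pderiv i (((univ.erase i).val.map (X : σ → MvPolynomial σ R)).esymm m) = 0 :=
    (pderiv i).map_multiset_esymm_eq_zero fun a ha => by
      obtain ⟨j, hj, rfl⟩ := Multiset.mem_map.mp ha
      exact pderiv_X_of_ne (ne_of_mem_erase hj)
  rw [esymm_succ_eq_esymm_erase i, map_add, pderiv_mul, hconst, hconst, pderiv_X_self]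
  ring

theorem pderiv_esymm_succ_add_X_mul_pderiv_esymm (i : σ) (l : ℕ) :
    pderiv i (esymm σ R (l + 1)) + X i * pderiv i (esymm σ R l) = esymm σ R l := by
  cases l with
  | zero => simp [esymm_zero]
  | succ l => rw [pderiv_esymm_succ, pderiv_esymm_succ, esymm_succ_eq_esymm_erase i]

end MvPolynomial

namespace PowerSeries

variable {R : Type*} [CommRing R]

theorem coeff_natCast_mul (m : ℕ) (f : R⟦X⟧) (N : ℕ) :
    coeff N ((m : R⟦X⟧) * f) = m * coeff N f := by
  rw [← map_natCast (C (R := R)), coeff_C_mul]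

theorem coeff_succ_mul_eq_sum_range {f g : R⟦X⟧} (hg : constantCoeff g = 0) (k : ℕ) :
    coeff (k + 1) (f * g) = ∑ j ∈ range (k + 1), coeff j f * coeff (k - j + 1) g := by
  rw [coeff_mul, Nat.sum_antidiagonal_eq_sum_range_succ_mk, sum_range_succ, Nat.sub_self,
    coeff_zero_eq_constantCoeff_apply, hg, mul_zero, add_zero]
  refine sum_congr rfl fun j hj => ?_
  rw [Nat.sub_add_comm (Nat.lt_succ_iff.mp (mem_range.mp hj))]

variable [Algebra ℚ R]

/-- `−log (1 − f)`, meaningful when `constantCoeff f = 0`: then `X ^ m ∣ f ^ m`, so only `m ≤ N`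
contributes to the coefficient of `X ^ N`; the `m = 0` term vanishes because `(0 : ℚ)⁻¹ = 0`. -/
def negLogOneSub (f : R⟦X⟧) : R⟦X⟧ :=
  mk fun N => ∑ m ∈ range (N + 1), (m : ℚ)⁻¹ • coeff N (f ^ m)

theorem constantCoeff_negLogOneSub (f : R⟦X⟧) : constantCoeff (negLogOneSub f) = 0 := by
  rw [← coeff_zero_eq_constantCoeff_apply, negLogOneSub, coeff_mk]
  simp

/- Compare with the truncation `T = ∑_{m ≤ N+1} f^m/m`: the two agree modulo `X^(N+2)`, a
derivation loses at most one power of `X`, and `(1 − f)·D T = D f − f^(N+1)·D f` telescopes. -/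
theorem one_sub_mul_map_negLogOneSub {S : Type*} [CommSemiring S] [Algebra S R]
    (D : Derivation S R⟦X⟧ R⟦X⟧) {f : R⟦X⟧} (hf : constantCoeff f = 0) :
    (1 - f) * D (negLogOneSub f) = D f := by
  have hXf : X ∣ f := X_dvd_iff.mpr hf
  ext N
  set T := ∑ m ∈ range (N + 2), (m : ℚ)⁻¹ • f ^ m
  have htrunc : X ^ (N + 2) ∣ negLogOneSub f - T := by
    refine X_pow_dvd_iff.mpr fun d hd => ?_
    rw [map_sub, negLogOneSub, coeff_mk, map_sum, sub_eq_zero]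
    simp_rw [coeff_smul]
    refine sum_subset (range_subset_range.mpr (by omega)) fun m _ hm => ?_
    rw [X_pow_dvd_iff.mp (pow_dvd_pow_of_dvd hXf m) d (by simpa using hm), smul_zero]
  have hgeom : (1 - f) * D T = D f - f ^ (N + 1) * D f := by
    have hterm : ∀ m : ℕ, ((m + 1 : ℕ) : ℚ)⁻¹ • D (f ^ (m + 1)) = f ^ m * D f := by
      intro m
      rw [Derivation.leibniz_pow, Nat.add_sub_cancel, ← Nat.cast_smul_eq_nsmul ℚ, smul_smul,
        inv_mul_cancel₀ (by positivity), one_smul, smul_eq_mul]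
    simp only [T, map_sum, map_rat_smul]
    rw [sum_range_succ', Nat.cast_zero, inv_zero, zero_smul, add_zero]
    simp only [hterm, ← sum_mul, ← mul_assoc, mul_neg_geom_sum]
    ring
  have hdvd : X ^ (N + 1) ∣ (1 - f) * D (negLogOneSub f) - D f := by
    have hsplit : (1 - f) * D (negLogOneSub f) - D f
        = (1 - f) * D (negLogOneSub f - T) - f ^ (N + 1) * D f := by
      rw [map_sub]
      linear_combination hgeom
    rw [hsplit]
    exact dvd_sub (dvd_mul_of_dvd_right (D.pow_dvd_map_of_pow_succ_dvd htrunc) _)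
      (dvd_mul_of_dvd_left (pow_dvd_pow_of_dvd hXf _) _)
  exact sub_eq_zero.mp (by simpa using X_pow_dvd_iff.mp hdvd N (Nat.lt_succ_self N))

end PowerSeries

section Ebar

variable (n : ℕ)

def ebarCoeff (l : ℕ) : ℚ := (-1) ^ l * ((n - l).factorial : ℚ) / n.factorial

theorem coeff_Ebar (l : ℕ) :
    PowerSeries.coeff l (Ebar n) = C (ebarCoeff n l) * esymm (Fin n) ℚ l := by
  rw [Ebar, map_sum]
  simp_rw [PowerSeries.coeff_monomial]
  rw [sum_ite_eq (range (n + 1)) l, ebarCoeff]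
  split_ifs with hl
  · rfl
  · rw [esymm_eq_zero_of_card_lt (by simpa using hl), mul_zero]

theorem ebarCoeff_eq_neg_mul_ebarCoeff_succ {l : ℕ} (h : l + 1 ≤ n) :
    ebarCoeff n l = -((n : ℚ) - l) * ebarCoeff n (l + 1) := by
  have hfact : (n - l).factorial = (n - (l + 1) + 1) * (n - (l + 1)).factorial := by
    rw [← Nat.factorial_succ]
    congr 1
    omega
  unfold ebarCoeff
  rw [hfact, pow_succ, Nat.cast_mul, Nat.cast_add, Nat.cast_sub h]
  push_cast
  ring

theorem constantCoeff_Ebar : PowerSeries.constantCoeff (Ebar n) = 1 := by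
  rw [← PowerSeries.coeff_zero_eq_constantCoeff_apply, coeff_Ebar, ebarCoeff]
  simp [Nat.factorial_ne_zero]

theorem Ebar_ne_zero : Ebar n ≠ 0 := fun h => by
  simpa [h] using constantCoeff_Ebar n

theorem Ebar_ode (i : Fin n) :
    PowerSeries.X * d⁄dX _ ((pderiv i).mapPowerSeries (Ebar n))
        + PowerSeries.C (X i) * (PowerSeries.X * (pderiv i).mapPowerSeries (Ebar n))
      = (n + 1 : (MvPolynomial (Fin n) ℚ)⟦X⟧) * (pderiv i).mapPowerSeries (Ebar n)
        + PowerSeries.X * Ebar n := by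
  refine PowerSeries.ext fun N => ?_
  cases N with
  | zero =>
    simp only [map_add, add_mul, one_mul, PowerSeries.coeff_zero_X_mul, PowerSeries.coeff_C_mul,
      PowerSeries.coeff_natCast_mul, Derivation.coeff_mapPowerSeries, coeff_Ebar, esymm_zero,
      mul_one, pderiv_C]
    ring
  | succ l =>
    simp only [map_add, add_mul, one_mul, PowerSeries.coeff_succ_X_mul, PowerSeries.coeff_C_mul,
      PowerSeries.coeff_natCast_mul, PowerSeries.coeff_derivative,
      Derivation.coeff_mapPowerSeries, coeff_Ebar, pderiv_C_mul]
    have hc : C (ebarCoeff n l) * pderiv i (esymm (Fin n) ℚ (l + 1))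
        = -((n : MvPolynomial (Fin n) ℚ) - (l : MvPolynomial (Fin n) ℚ)) * C (ebarCoeff n (l + 1))
          * pderiv i (esymm (Fin n) ℚ (l + 1)) := by
      by_cases hl : l + 1 ≤ n
      · rw [ebarCoeff_eq_neg_mul_ebarCoeff_succ n hl, map_mul, map_neg, map_sub, map_natCast,
          map_natCast]
      · rw [esymm_eq_zero_of_card_lt (by simpa using hl : Fintype.card (Fin n) < l + 1),
          map_zero, mul_zero, mul_zero]
    linear_combination
      C (ebarCoeff n l) * pderiv_esymm_succ_add_X_mul_pderiv_esymm (R := ℚ) i l - hc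

end Ebar

section NegLogEbar

variable (n : ℕ)

def negLogEbar : (MvPolynomial (Fin n) ℚ)⟦X⟧ := PowerSeries.negLogOneSub (1 - Ebar n)

theorem Ebar_mul_map_negLogEbar {S : Type*} [CommSemiring S] [Algebra S (MvPolynomial (Fin n) ℚ)]
    (D : Derivation S (MvPolynomial (Fin n) ℚ)⟦X⟧ (MvPolynomial (Fin n) ℚ)⟦X⟧) :
    Ebar n * D (negLogEbar n) = -D (Ebar n) := by
  have h := PowerSeries.one_sub_mul_map_negLogOneSub D (f := 1 - Ebar n)
    (by rw [map_sub, map_one, constantCoeff_Ebar, sub_self])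
  rwa [sub_sub_cancel, map_sub, D.map_one_eq_zero, zero_sub] at h

theorem negLogEbar_ode (i : Fin n) :
    PowerSeries.X * (PowerSeries.C (X i) * (pderiv i).mapPowerSeries (negLogEbar n)
        + d⁄dX _ ((pderiv i).mapPowerSeries (negLogEbar n)) + 1)
      = PowerSeries.X * d⁄dX _ (negLogEbar n) * (pderiv i).mapPowerSeries (negLogEbar n)
        + (n + 1 : (MvPolynomial (Fin n) ℚ)⟦X⟧) * (pderiv i).mapPowerSeries (negLogEbar n) := by
  have hi := Ebar_mul_map_negLogEbar n (pderiv i).mapPowerSeries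
  have hz := Ebar_mul_map_negLogEbar n (d⁄dX _)
  have hzi := congrArg (d⁄dX _) hi
  rw [Derivation.leibniz, smul_eq_mul, smul_eq_mul, map_neg] at hzi
  refine mul_left_cancel₀ (Ebar_ne_zero n) ?_
  linear_combination
    (PowerSeries.C (X i) * PowerSeries.X - (n + 1 : (MvPolynomial (Fin n) ℚ)⟦X⟧)) * hi
      + PowerSeries.X * hzi - PowerSeries.X * (pderiv i).mapPowerSeries (negLogEbar n) * hz
      - Ebar_ode n i

theorem uPoly_eq_coeff_derivative_negLogEbar (k : ℕ) :
    uPoly n k = PowerSeries.coeff k (d⁄dX _ (negLogEbar n)) := by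
  rw [PowerSeries.coeff_derivative, uPoly, negLogEbar, PowerSeries.negLogOneSub,
    PowerSeries.coeff_mk, smul_eq_C_mul, mul_comm]
  simp

theorem xiPoly_eq_coeff_pderiv_negLogEbar (k : ℕ) (i : Fin n) :
    xiPoly n k i = PowerSeries.coeff (k + 1) ((pderiv i).mapPowerSeries (negLogEbar n)) := by
  rw [xiPoly, uPoly, Derivation.map_smul, smul_smul, inv_mul_cancel₀ (by positivity), one_smul,
    Derivation.coeff_mapPowerSeries, negLogEbar, PowerSeries.negLogOneSub, PowerSeries.coeff_mk]

end NegLogEbar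

theorem xi_recursion_general (n : ℕ) (k : ℕ) (i : Fin n) :
    X i * xiPoly n k i
      = (∑ j ∈ Finset.range (k + 1), uPoly n j * xiPoly n (k - j) i)
        + ((n : ℚ) - (k : ℚ) - 1) • xiPoly n (k + 1) i := by
  have hF : PowerSeries.constantCoeff ((pderiv i).mapPowerSeries (negLogEbar n)) = 0 := by
    rw [Derivation.constantCoeff_mapPowerSeries, negLogEbar,
      PowerSeries.constantCoeff_negLogOneSub, map_zero]
  have h := congrArg (PowerSeries.coeff (k + 2)) (negLogEbar_ode n i)
  simp only [mul_assoc, map_add, add_mul, one_mul, PowerSeries.coeff_succ_X_mul,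
    PowerSeries.coeff_C_mul, PowerSeries.coeff_derivative, PowerSeries.coeff_one,
    if_neg k.succ_ne_zero, PowerSeries.coeff_natCast_mul] at h
  rw [PowerSeries.coeff_succ_mul_eq_sum_range hF] at h
  simp only [uPoly_eq_coeff_derivative_negLogEbar, xiPoly_eq_coeff_pderiv_negLogEbar,
    smul_eq_C_mul, map_sub, map_natCast, map_one]
  push_cast at h
  linear_combination h

/-- With `(ξ_k)_i = (1/(k+1))·∂u_k/∂x_i`, for every `k ≥ 0`
and every `i`:
`x_i·(ξ_k)_i = ∑_{j=0}^{k} u_j·(ξ_{k−j})_i + (n−k−1)·(ξ_{k+1})_i`. -/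
theorem xi_recursion (n : ℕ) (hn : 1 ≤ n) (k : ℕ) (i : Fin n) :
    X i * xiPoly n k i
      = (∑ j ∈ Finset.range (k + 1), uPoly n j * xiPoly n (k - j) i)
        + ((n : ℚ) - (k : ℚ) - 1) • xiPoly n (k + 1) i :=
  xi_recursion_general n k i
end
end
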